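/- arXiv:math/0111139 — 6 statements merged into one kernel-verified Lean document; each statement's English description precedes it below -/
import Mathlib

section
/- Let A be a ring that is free as a Z-module with a finite Z_+-basis B = {b_i} (i.e., all structure constants b_i * b_j = Σ_k c_{ij}^k b_k satisfy c_{ij}^k ≥ 0). Then up to equivalence there are only finitely many irreducible Z_+-modules over A. -/
/-- A ℤ₊-module over a ring A with fixed ℤ-basis b : a free ℤ-module with a fixed basis
on which each basis element of A acts with nonnegative integer structure constants. -/
structure ZPlusModule {A : Type} [Ring A] {ι : Type} (b : Module.Basis ι ℤ A) where
  carrier : Type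
  [acg : AddCommGroup carrier]
  [mod : Module A carrier]
  κ : Type
  basis : Module.Basis κ ℤ carrier
  nonneg : ∀ (i : ι) (j k : κ), 0 ≤ basis.repr (b i • basis j) k

attribute [instance] ZPlusModule.acg ZPlusModule.mod

namespace ZPlusModule

variable {A : Type} [Ring A] {ι : Type} {b : Module.Basis ι ℤ A}

/-- Equivalence of ℤ₊-modules: a bijection of bases inducing an A-module isomorphism. -/
def Equiv (M₁ M₂ : ZPlusModule b) : Prop :=
  ∃ (e : M₁.κ ≃ M₂.κ) (f : M₁.carrier ≃ₗ[A] M₂.carrier),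
    ∀ j, f (M₁.basis j) = M₂.basis (e j)

/-- A ℤ₊-submodule is a subset J of the basis whose ℤ-span is an A-submodule;
M is irreducible if its only ℤ₊-submodules are 0 and M. -/
def Irred (M : ZPlusModule b) : Prop :=
  Nonempty M.κ ∧
  ∀ J : Set M.κ,
    (∀ (a : A) (x : M.carrier), x ∈ Submodule.span ℤ (⇑M.basis '' J) →
      a • x ∈ Submodule.span ℤ (⇑M.basis '' J)) → J = ∅ ∨ J = Set.univ

end ZPlusModule


/-! Put `z = ∑ bᵢ` and let `Z` be the matrix of `z` on the basis of `M`. Writing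
`z² = ∑ cₖ bₖ` with `cₖ ≥ 0` and `N = ∑ cₖ`, positivity gives `Z² ≤ N • Z` entrywise.
Irreducibility makes the graph of `Z` strongly connected, and `Z² ≤ N • Z` makes it transitive,
so every off-diagonal entry of `Z` is positive. Then `∑ₗ Z_{jl} Z_{lj} ≤ N Z_{jj} ≤ N²` bounds
the rank of `M` by `N² + 1` and every structure constant of `M` by `N²`: up to relabelling the
basis, only finitely many such data exist. -/

lemma Module.Basis.repr_equiv_apply {R M M' κ κ' : Type} [Semiring R] [AddCommMonoid M]
    [Module R M] [AddCommMonoid M'] [Module R M'] (m : Module.Basis κ R M)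
    (m' : Module.Basis κ' R M') (e : κ ≃ κ') (x : M) (k : κ) :
    m'.repr (m.equiv m' e x) (e k) = m.repr x k := by
  have : Finsupp.lapply (e k) ∘ₗ m'.repr.toLinearMap ∘ₗ (m.equiv m' e).toLinearMap =
      Finsupp.lapply k ∘ₗ m.repr.toLinearMap :=
    m.ext fun j => by simp [Finsupp.single_apply_left e.injective]
  exact LinearMap.congr_fun this x

namespace ZPlusModule

section

variable {A : Type} [Ring A] {ι : Type} {b : Module.Basis ι ℤ A}

def _root_.Module.Basis.IsZPlus (b : Module.Basis ι ℤ A) : Prop :=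
  ∀ i j k, 0 ≤ b.repr (b i * b j) k

lemma equiv_of_repr_smul_eq (M₁ M₂ : ZPlusModule b) (e : M₁.κ ≃ M₂.κ)
    (h : ∀ i j k,
      M₂.basis.repr (b i • M₂.basis (e j)) (e k) = M₁.basis.repr (b i • M₁.basis j) k) :
    Equiv M₁ M₂ := by
  let g := M₁.basis.equiv M₂.basis e
  have hbasis : ∀ i j, g (b i • M₁.basis j) = b i • g (M₁.basis j) := by
    intro i j
    refine M₂.basis.repr.injective (Finsupp.ext fun k' => ?_)
    obtain ⟨k, rfl⟩ := e.surjective k'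
    rw [Module.Basis.repr_equiv_apply, Module.Basis.equiv_apply, h]
  have hb : ∀ i x, g (b i • x) = b i • g x := fun i =>
    LinearMap.congr_fun (M₁.basis.ext
      (f₁ := g.toLinearMap ∘ₗ DistribSMul.toLinearMap ℤ _ (b i))
      (f₂ := DistribSMul.toLinearMap ℤ _ (b i) ∘ₗ g.toLinearMap) (hbasis i))
  have hsmul : ∀ (a : A) x, g (a • x) = a • g x := fun a x =>
    LinearMap.congr_fun (b.ext (f₁ := g.toLinearMap ∘ₗ LinearMap.id.smulRight x)
      (f₂ := LinearMap.id.smulRight (g x)) fun i => hb i x) a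
  exact ⟨e, g.toAddEquiv.toLinearEquiv hsmul, fun j => M₁.basis.equiv_apply _ _ _⟩

def Adj (M : ZPlusModule b) (j k : M.κ) : Prop :=
  ∃ i, M.basis.repr (b i • M.basis j) k ≠ 0

lemma smul_mem_span_image_of_adj_closed (M : ZPlusModule b) {J : Set M.κ}
    (hJ : ∀ j ∈ J, ∀ k, M.Adj j k → k ∈ J) (a : A) {x : M.carrier}
    (hx : x ∈ Submodule.span ℤ (M.basis '' J)) : a • x ∈ Submodule.span ℤ (M.basis '' J) := by
  set p := Submodule.span ℤ (M.basis '' J)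
  have hbasis : ∀ j ∈ J, ∀ i, b i • M.basis j ∈ p := fun j hj i =>
    M.basis.mem_span_image.2 fun k hk => hJ j hj k ⟨i, Finsupp.mem_support_iff.1 hk⟩
  have hgen : ∀ j ∈ J, a • M.basis j ∈ p := by
    intro j hj
    have : Submodule.span ℤ (Set.range b) ≤ p.comap (LinearMap.id.smulRight (M.basis j)) :=
      Submodule.span_le.2 (Set.range_subset_iff.2 (hbasis j hj))
    exact this (b.span_eq ▸ Submodule.mem_top)
  have : p ≤ p.comap (DistribSMul.toLinearMap ℤ _ a) :=
    Submodule.span_le.2 (Set.image_subset_iff.2 hgen)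
  exact this hx

lemma reflTransGen_adj_of_irred {M : ZPlusModule b} (hM : M.Irred) (j k : M.κ) :
    Relation.ReflTransGen M.Adj j k := by
  have hclosed : ∀ l ∈ {l | Relation.ReflTransGen M.Adj j l}, ∀ k, M.Adj l k →
      k ∈ {l | Relation.ReflTransGen M.Adj j l} :=
    fun _ hl _ hlk => hl.tail hlk
  rcases hM.2 _ (fun a _ => M.smul_mem_span_image_of_adj_closed hclosed a) with h | h
  · exact absurd .refl (Set.eq_empty_iff_forall_notMem.1 h j)
  · exact Set.eq_univ_iff_forall.1 h k

lemma finite_of_embedding_fin [Finite ι] {T : Type} (n : ℕ) (C : ℤ) (fam : T → ZPlusModule b)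
    (hinj : ∀ t₁ t₂, Equiv (fam t₁) (fam t₂) → t₁ = t₂) (hne : ∀ t, Nonempty (fam t).κ)
    (hemb : ∀ t, Nonempty ((fam t).κ ↪ Fin n))
    (hC : ∀ t i j k, (fam t).basis.repr (b i • (fam t).basis j) k ≤ C) : Finite T := by
  let u t : (fam t).κ ↪ Fin n := (hemb t).some
  let v t : Fin n → (fam t).κ := @Function.invFun _ _ (hne t) (u t)
  have hvu : ∀ t j, v t (u t j) = j := fun t =>
    @Function.leftInverse_invFun _ _ (hne t) _ (u t).injective
  -- the image of the basis in `Fin n`, with the structure constants transported along it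
  let code t : Set (Fin n) × (ι → Fin n → Fin n → Set.Icc 0 C) :=
    (Set.range (u t), fun i p q =>
      ⟨_, (fam t).nonneg i (v t p) (v t q), hC t i (v t p) (v t q)⟩)
  refine Finite.of_injective code fun t₁ t₂ h => hinj t₁ t₂ ?_
  let e : (fam t₁).κ ≃ (fam t₂).κ := (Equiv.ofInjective _ (u t₁).injective).trans
    ((Equiv.setCongr (congrArg Prod.fst h)).trans (Equiv.ofInjective _ (u t₂).injective).symm)
  have hue : ∀ j, u t₂ (e j) = u t₁ j := fun j => by simp [e, Equiv.apply_ofInjective_symm]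
  refine equiv_of_repr_smul_eq _ _ e fun i j k => ?_
  have h₁ := congrArg Subtype.val (congrFun₃ (congrArg Prod.snd h) i (u t₁ j) (u t₁ k))
  dsimp only [code] at h₁
  rw [hvu, hvu, ← hue, ← hue, hvu, hvu] at h₁
  exact h₁.symm

end

noncomputable section

variable {A : Type} [Ring A] {ι : Type} [Fintype ι] {b : Module.Basis ι ℤ A}

def sumBasis (b : Module.Basis ι ℤ A) : A := ∑ i, b i

def sqCoeffSum (b : Module.Basis ι ℤ A) : ℤ := ∑ k, b.repr (sumBasis b * sumBasis b) k

def sumBasisMatrix (M : ZPlusModule b) (j k : M.κ) : ℤ :=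
  M.basis.repr (sumBasis b • M.basis j) k

variable (M : ZPlusModule b)

lemma sumBasisMatrix_eq_sum (j k : M.κ) :
    M.sumBasisMatrix j k = ∑ i, M.basis.repr (b i • M.basis j) k := by
  simp only [sumBasisMatrix, sumBasis, Finset.sum_smul, map_sum, Finsupp.finsetSum_apply]

lemma sumBasisMatrix_nonneg (j k : M.κ) : 0 ≤ M.sumBasisMatrix j k := by
  rw [sumBasisMatrix_eq_sum]
  exact Finset.sum_nonneg fun i _ => M.nonneg i j k

lemma repr_smul_le_sumBasisMatrix (i : ι) (j k : M.κ) :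
    M.basis.repr (b i • M.basis j) k ≤ M.sumBasisMatrix j k := by
  rw [sumBasisMatrix_eq_sum]
  exact Finset.single_le_sum (f := fun i => M.basis.repr (b i • M.basis j) k)
    (fun i _ => M.nonneg i j k) (Finset.mem_univ i)

lemma sumBasisMatrix_pos_of_adj {j k : M.κ} (h : M.Adj j k) : 0 < M.sumBasisMatrix j k := by
  obtain ⟨i, hi⟩ := h
  exact (lt_of_le_of_ne (M.nonneg i j k) hi.symm).trans_le (M.repr_smul_le_sumBasisMatrix i j k)

lemma sum_mul_le_repr_sumBasis_sq_smul (j k : M.κ) (S : Finset M.κ) :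
    ∑ l ∈ S, M.sumBasisMatrix j l * M.sumBasisMatrix l k ≤
      M.basis.repr ((sumBasis b * sumBasis b) • M.basis j) k := by
  classical
  set f := M.basis.repr (sumBasis b • M.basis j)
  have hexpand : M.basis.repr ((sumBasis b * sumBasis b) • M.basis j) k =
      ∑ l ∈ f.support, M.sumBasisMatrix j l * M.sumBasisMatrix l k := by
    conv_lhs => rw [mul_smul, ← M.basis.linearCombination_repr (sumBasis b • M.basis j)]
    simp only [Finsupp.linearCombination_apply, Finsupp.sum, Finset.smul_sum, smul_comm _ (_ : ℤ),
      map_sum, map_zsmul, Finsupp.finsetSum_apply, Finsupp.smul_apply, smul_eq_mul]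
    rfl
  have hzero : ∀ l ∈ S ∪ f.support, l ∉ f.support →
      M.sumBasisMatrix j l * M.sumBasisMatrix l k = 0 := fun l _ hl => by
    rw [show M.sumBasisMatrix j l = 0 from Finsupp.notMem_support_iff.1 hl, zero_mul]
  calc ∑ l ∈ S, M.sumBasisMatrix j l * M.sumBasisMatrix l k
      ≤ ∑ l ∈ S ∪ f.support, M.sumBasisMatrix j l * M.sumBasisMatrix l k :=
        Finset.sum_le_sum_of_subset_of_nonneg Finset.subset_union_left fun l _ _ =>
          mul_nonneg (M.sumBasisMatrix_nonneg j l) (M.sumBasisMatrix_nonneg l k)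
    _ = _ := by rw [hexpand, Finset.sum_subset Finset.subset_union_right hzero]

variable {M}

lemma repr_sumBasis_sq_nonneg (hb : b.IsZPlus) (k : ι) :
    0 ≤ b.repr (sumBasis b * sumBasis b) k := by
  simp only [sumBasis, Finset.sum_mul_sum, map_sum, Finsupp.finsetSum_apply]
  exact Finset.sum_nonneg fun i _ => Finset.sum_nonneg fun i' _ => hb i i' k

lemma repr_sumBasis_sq_le_sqCoeffSum (hb : b.IsZPlus) (k : ι) :
    b.repr (sumBasis b * sumBasis b) k ≤ sqCoeffSum b :=
  Finset.single_le_sum (f := fun k => b.repr (sumBasis b * sumBasis b) k)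
    (fun k _ => repr_sumBasis_sq_nonneg hb k) (Finset.mem_univ k)

lemma sqCoeffSum_nonneg (hb : b.IsZPlus) : 0 ≤ sqCoeffSum b :=
  Finset.sum_nonneg fun k _ => repr_sumBasis_sq_nonneg hb k

lemma repr_sumBasis_sq_smul_le (hb : b.IsZPlus) (j k : M.κ) :
    M.basis.repr ((sumBasis b * sumBasis b) • M.basis j) k ≤
      sqCoeffSum b * M.sumBasisMatrix j k := by
  conv_lhs => rw [← b.sum_repr (sumBasis b * sumBasis b)]
  simp only [Finset.sum_smul, smul_assoc, map_sum, map_zsmul, Finsupp.finsetSum_apply,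
    Finsupp.smul_apply, smul_eq_mul]
  rw [sumBasisMatrix_eq_sum, Finset.mul_sum]
  exact Finset.sum_le_sum fun i _ =>
    mul_le_mul_of_nonneg_right (repr_sumBasis_sq_le_sqCoeffSum hb i) (M.nonneg i j k)

lemma sum_sumBasisMatrix_mul_le (hb : b.IsZPlus) (j k : M.κ) (S : Finset M.κ) :
    ∑ l ∈ S, M.sumBasisMatrix j l * M.sumBasisMatrix l k ≤
      sqCoeffSum b * M.sumBasisMatrix j k :=
  (M.sum_mul_le_repr_sumBasis_sq_smul j k S).trans (repr_sumBasis_sq_smul_le hb j k)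

lemma sumBasisMatrix_mul_le (hb : b.IsZPlus) (j l k : M.κ) :
    M.sumBasisMatrix j l * M.sumBasisMatrix l k ≤ sqCoeffSum b * M.sumBasisMatrix j k := by
  simpa using sum_sumBasisMatrix_mul_le hb j k {l}

lemma sumBasisMatrix_pos_trans (hb : b.IsZPlus) {j l k : M.κ} (hjl : 0 < M.sumBasisMatrix j l)
    (hlk : 0 < M.sumBasisMatrix l k) : 0 < M.sumBasisMatrix j k :=
  pos_of_mul_pos_right ((mul_pos hjl hlk).trans_le (sumBasisMatrix_mul_le hb j l k))
    (sqCoeffSum_nonneg hb)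

lemma sumBasisMatrix_pos_of_ne (hb : b.IsZPlus) (hM : M.Irred) {j k : M.κ} (hjk : j ≠ k) :
    0 < M.sumBasisMatrix j k := by
  obtain h | h := Relation.reflTransGen_iff_eq_or_transGen.1 (reflTransGen_adj_of_irred hM j k)
  · exact absurd h.symm hjk
  · clear hjk
    induction h with
    | single h => exact M.sumBasisMatrix_pos_of_adj h
    | tail _ h ih => exact sumBasisMatrix_pos_trans hb ih (M.sumBasisMatrix_pos_of_adj h)

lemma sumBasisMatrix_self_le (hb : b.IsZPlus) (j : M.κ) : M.sumBasisMatrix j j ≤ sqCoeffSum b := by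
  obtain h | h := (M.sumBasisMatrix_nonneg j j).eq_or_lt
  · exact h ▸ sqCoeffSum_nonneg hb
  · exact le_of_mul_le_mul_right (sumBasisMatrix_mul_le hb j j j) h

lemma sumBasisMatrix_le_sq (hb : b.IsZPlus) (hM : M.Irred) (j k : M.κ) :
    M.sumBasisMatrix j k ≤ sqCoeffSum b ^ 2 := by
  obtain rfl | hjk := eq_or_ne j k
  · exact (sumBasisMatrix_self_le hb j).trans (Int.le_self_sq _)
  calc M.sumBasisMatrix j k
      ≤ M.sumBasisMatrix j k * M.sumBasisMatrix k j :=
        le_mul_of_one_le_right (M.sumBasisMatrix_nonneg j k)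
          (sumBasisMatrix_pos_of_ne hb hM hjk.symm)
    _ ≤ sqCoeffSum b * M.sumBasisMatrix j j := sumBasisMatrix_mul_le hb j k j
    _ ≤ sqCoeffSum b ^ 2 := by
        rw [sq]
        exact mul_le_mul_of_nonneg_left (sumBasisMatrix_self_le hb j) (sqCoeffSum_nonneg hb)

lemma card_le_sqCoeffSum_sq_add_one (hb : b.IsZPlus) (hM : M.Irred) (S : Finset M.κ) :
    (S.card : ℤ) ≤ sqCoeffSum b ^ 2 + 1 := by
  classical
  obtain ⟨j⟩ := hM.1
  have hcard : ((S.erase j).card : ℤ) ≤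
      ∑ l ∈ S.erase j, M.sumBasisMatrix j l * M.sumBasisMatrix l j := by
    simpa using Finset.card_nsmul_le_sum (S.erase j)
      (fun l => M.sumBasisMatrix j l * M.sumBasisMatrix l j) 1 fun l hl =>
      one_le_mul_of_one_le_of_one_le
        (sumBasisMatrix_pos_of_ne hb hM (Finset.ne_of_mem_erase hl).symm)
        (sumBasisMatrix_pos_of_ne hb hM (Finset.ne_of_mem_erase hl))
  have hsum := sum_sumBasisMatrix_mul_le hb j j (S.erase j)
  have hdiag := mul_le_mul_of_nonneg_left (sumBasisMatrix_self_le hb j) (sqCoeffSum_nonneg hb)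
  have herase := Finset.pred_card_le_card_erase (s := S) (a := j)
  rw [← sq] at hdiag
  omega

lemma nonempty_embedding_fin (hb : b.IsZPlus) (hM : M.Irred) :
    Nonempty (M.κ ↪ Fin (sqCoeffSum b ^ 2 + 1).toNat) := by
  have : Finite M.κ := by
    by_contra hinf
    have : Infinite M.κ := not_finite_iff_infinite.1 hinf
    obtain ⟨S, hS⟩ := Infinite.exists_subset_card_eq M.κ ((sqCoeffSum b ^ 2 + 1).toNat + 1)
    have := card_le_sqCoeffSum_sq_add_one hb hM S
    omega
  have := Fintype.ofFinite M.κ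
  refine Function.Embedding.nonempty_of_card_le ?_
  have := card_le_sqCoeffSum_sq_add_one hb hM Finset.univ
  rw [Fintype.card_fin, ← Finset.card_univ]
  omega

end

end ZPlusModule

/-- Proposition 1: over a ℤ₊-ring A of finite rank over ℤ there are, up to
equivalence, only finitely many irreducible ℤ₊-modules: any family of pairwise
inequivalent irreducible ℤ₊-modules is finite. -/
theorem finitely_many_irreducible_ZPlus_modules
    {A : Type} [Ring A] {ι : Type} [Fintype ι] (b : Module.Basis ι ℤ A)
    (hring : ∀ i j k, 0 ≤ b.repr (b i * b j) k)
    (T : Type) (fam : T → ZPlusModule b)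
    (hirr : ∀ t, (fam t).Irred)
    (hinj : ∀ t₁ t₂, ZPlusModule.Equiv (fam t₁) (fam t₂) → t₁ = t₂) :
    Finite T :=
  ZPlusModule.finite_of_embedding_fin _ _ fam hinj (fun t => (hirr t).1)
    (fun t => ZPlusModule.nonempty_embedding_fin hring (hirr t))
    fun t i j k => ((fam t).repr_smul_le_sumBasisMatrix i j k).trans
      (ZPlusModule.sumBasisMatrix_le_sq hring (hirr t) j k)
end

section
/- Any irreducible Z_+-module over a Z_+-ring A of finite rank over Z has finite rank over Z; moreover, setting b = Σ_{b_i ∈ B} b_i and writing b² = Σ_i n_i b_i with N = max_i n_i, every irreducible Z_+-module M with basis {m_i}_{i∈I} satisfies: the minimal value d = min_{i∈I} d_i of the coefficient sums d_i (where b·m_i = Σ_k d_i^k m_k and d_i = Σ_k d_i^k) satisfies d ≤ N. -/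
/-!
Fix a basis element `m j`. Positivity of the structure constants forces the support of
`b l • m k`, for `m k` occurring in some `b i • m j`, to lie in the support of `(b l * b i) • m j`,
hence in the finite union of the supports of the `b s • m j`. So `j` together with that union
spans a `ℤ₊`-submodule, which by irreducibility is everything.

For the bound, let `D` be the coefficient-sum functional and `d j = D (b • m j)`. Since `b • m j₀`
has nonnegative coefficients, `D (b² • m j₀) ≥ d j₀ * d j₀` by minimality of `d j₀`, while expanding
`b²` in the basis gives `D (b² • m j₀) ≤ N * d j₀`. Finally `d j₀ > 0`, since otherwise every
`b i` kills `m j₀`, and then so does `1`.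
-/

open Module Finset

namespace Module.Basis

variable {κ M : Type*} [AddCommGroup M] (m : Basis κ ℤ M)

noncomputable def coeffSum : M →ₗ[ℤ] ℤ :=
  Finsupp.lsum ℤ (fun _ => LinearMap.id) ∘ₗ m.repr.toLinearMap

theorem coeffSum_apply (x : M) : m.coeffSum x = (m.repr x).sum fun _ v => v := rfl

theorem coeffSum_eq_sum [Fintype κ] (x : M) : m.coeffSum x = ∑ k, m.repr x k :=
  Finsupp.sum_fintype _ _ fun _ => rfl

variable {m}

theorem coeffSum_nonneg {x : M} (hx : ∀ k, 0 ≤ m.repr x k) : 0 ≤ m.coeffSum x :=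
  Finsupp.sum_nonneg fun k _ => hx k

theorem eq_zero_of_coeffSum_eq_zero {x : M} (hx : ∀ k, 0 ≤ m.repr x k)
    (h : m.coeffSum x = 0) : x = 0 := by
  have hzero := (Finset.sum_eq_zero_iff_of_nonneg fun k _ => hx k).mp h
  rw [← m.repr.map_eq_zero_iff, ← Finsupp.support_eq_empty, Finset.eq_empty_iff_forall_notMem]
  exact fun k hk => Finsupp.mem_support_iff.mp hk (hzero k hk)

end Module.Basis

namespace ZPlusModule

open Basis

variable {A : Type*} [Ring A] {ι : Type*} {M : Type*} [AddCommGroup M] [Module A M]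
  {κ : Type*} {m : Basis κ ℤ M}

variable (A) in
def IsStableIndexSet (m : Basis κ ℤ M) (J : Set κ) : Prop :=
  ∀ (a : A) (x : M), x ∈ Submodule.span ℤ (m '' J) → a • x ∈ Submodule.span ℤ (m '' J)

theorem smul_eq_sum_repr_smul [Fintype ι] (b : Basis ι ℤ A) (a : A) (x : M) :
    a • x = ∑ i, b.repr a i • b i • x := by
  conv_lhs => rw [← b.sum_repr a]
  simp only [Finset.sum_smul, smul_assoc]

theorem repr_smul_apply (a : A) (x : M) (r : κ) :
    m.repr (a • x) r = (m.repr x).sum fun p c => c * m.repr (a • m p) r := by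
  let f : M →ₗ[ℤ] ℤ :=
    Finsupp.lapply r ∘ₗ m.repr.toLinearMap ∘ₗ DistribSMul.toLinearMap ℤ M a
  change f x = _
  conv_lhs => rw [← m.linearCombination_repr x]
  rw [Finsupp.apply_linearCombination, Finsupp.linearCombination_apply]
  rfl

theorem isStableIndexSet_of_forall_support_subset [Fintype ι] (b : Basis ι ℤ A) {J : Set κ}
    (hJ : ∀ i, ∀ k ∈ J, ↑(m.repr (b i • m k)).support ⊆ J) : IsStableIndexSet A m J := by
  intro a x hx
  suffices Submodule.span ℤ (m '' J) ≤
      (Submodule.span ℤ (m '' J)).comap (DistribSMul.toLinearMap ℤ M a) from this hx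
  rw [Submodule.span_le]
  rintro _ ⟨k, hk, rfl⟩
  rw [SetLike.mem_coe, Submodule.mem_comap, DistribSMul.toLinearMap_apply,
    smul_eq_sum_repr_smul b]
  exact Submodule.sum_mem _ fun i _ =>
    Submodule.smul_mem _ _ (m.mem_span_image.2 (hJ i k hk))

theorem support_repr_smul_subset_biUnion [Fintype ι] [DecidableEq κ] (b : Basis ι ℤ A)
    (a : A) (x : M) :
    (m.repr (a • x)).support ⊆ univ.biUnion fun i => (m.repr (b i • x)).support := by
  rw [smul_eq_sum_repr_smul b, map_sum]
  refine Finsupp.support_finsetSum.trans (biUnion_mono fun i _ => ?_)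
  rw [map_zsmul]
  exact Finsupp.support_smul

/-- This is where positivity enters: no cancellation can occur in `a • y`. -/
theorem support_repr_smul_subset_of_mem_support {a : A} (ha : ∀ p r, 0 ≤ m.repr (a • m p) r)
    {y : M} (hy : ∀ p, 0 ≤ m.repr y p) {k : κ} (hk : k ∈ (m.repr y).support) :
    (m.repr (a • m k)).support ⊆ (m.repr (a • y)).support := by
  intro r hr
  rw [Finsupp.mem_support_iff, repr_smul_apply]
  have hpos : 0 < m.repr y k * m.repr (a • m k) r :=
    mul_pos ((hy k).lt_of_ne' (Finsupp.mem_support_iff.mp hk))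
      ((ha k r).lt_of_ne' (Finsupp.mem_support_iff.mp hr))
  refine (hpos.trans_le ?_).ne'
  exact Finset.single_le_sum (fun p _ => mul_nonneg (hy p) (ha p r)) hk

theorem isStableIndexSet_insert_biUnion [Fintype ι] [DecidableEq κ] (b : Basis ι ℤ A)
    (hmod : ∀ i j k, 0 ≤ m.repr (b i • m j) k) (j : κ) :
    IsStableIndexSet A m ↑(insert j (univ.biUnion fun i => (m.repr (b i • m j)).support)) := by
  refine isStableIndexSet_of_forall_support_subset b fun l k hk => Finset.coe_subset.mpr ?_
  rcases Finset.mem_insert.1 hk with rfl | hk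
  · exact (subset_biUnion_of_mem (fun i => (m.repr (b i • m k)).support) (mem_univ l)).trans
      (subset_insert _ _)
  · obtain ⟨i, -, hki⟩ := Finset.mem_biUnion.1 hk
    calc (m.repr (b l • m k)).support
        ⊆ (m.repr (b l • b i • m j)).support :=
          support_repr_smul_subset_of_mem_support (hmod l) (hmod i j) hki
      _ = (m.repr ((b l * b i) • m j)).support := by rw [mul_smul]
      _ ⊆ univ.biUnion fun i => (m.repr (b i • m j)).support :=
          support_repr_smul_subset_biUnion b _ _
      _ ⊆ insert j (univ.biUnion fun i => (m.repr (b i • m j)).support) := subset_insert _ _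

theorem finite_of_forall_isStableIndexSet [Fintype ι] (b : Basis ι ℤ A)
    (hmod : ∀ i j k, 0 ≤ m.repr (b i • m j) k)
    (hirr : ∀ J, IsStableIndexSet A m J → J = ∅ ∨ J = Set.univ) : Finite κ := by
  classical
  rcases isEmpty_or_nonempty κ with _ | ⟨⟨j⟩⟩
  · infer_instance
  set J := insert j (univ.biUnion fun i => (m.repr (b i • m j)).support)
  rcases hirr J (isStableIndexSet_insert_biUnion b hmod j) with h | h
  · exact absurd h (Set.nonempty_iff_ne_empty.1 ⟨j, mem_insert_self _ _⟩)
  · exact Set.finite_univ_iff.mp (h ▸ J.finite_toSet)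

theorem coeffSum_smul_eq_sum [Fintype κ] (a : A) (x : M) :
    m.coeffSum (a • x) = ∑ p, m.repr x p * m.coeffSum (a • m p) := by
  conv_lhs => rw [← m.sum_repr x]
  simp only [Finset.smul_sum, smul_comm a, map_sum, map_zsmul, smul_eq_mul]

theorem mul_coeffSum_le_coeffSum_smul [Fintype κ] {a : A} {x : M} (hx : ∀ p, 0 ≤ m.repr x p)
    {c : ℤ} (hc : ∀ p, c ≤ m.coeffSum (a • m p)) : c * m.coeffSum x ≤ m.coeffSum (a • x) := by
  rw [coeffSum_smul_eq_sum, coeffSum_eq_sum, Finset.mul_sum]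
  refine sum_le_sum fun p _ => ?_
  rw [mul_comm]
  exact mul_le_mul_of_nonneg_left (hc p) (hx p)

variable [Fintype ι] (b : Basis ι ℤ A)

theorem coeffSum_sum_smul (x : M) :
    m.coeffSum ((∑ i, b i) • x) = ∑ i, m.coeffSum (b i • x) := by
  rw [Finset.sum_smul, map_sum]

theorem repr_sum_smul_nonneg (hmod : ∀ i j k, 0 ≤ m.repr (b i • m j) k) (j k : κ) :
    0 ≤ m.repr ((∑ i, b i) • m j) k := by
  rw [Finset.sum_smul, map_sum, Finset.sum_apply']
  exact sum_nonneg fun i _ => hmod i j k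

theorem coeffSum_smul_le (hmod : ∀ i j k, 0 ≤ m.repr (b i • m j) k) {a : A} {N : ℤ}
    (ha : ∀ i, b.repr a i ≤ N) (j : κ) :
    m.coeffSum (a • m j) ≤ N * m.coeffSum ((∑ i, b i) • m j) := by
  rw [smul_eq_sum_repr_smul b, map_sum, coeffSum_sum_smul, Finset.mul_sum]
  refine sum_le_sum fun i _ => ?_
  rw [map_zsmul, smul_eq_mul]
  exact mul_le_mul_of_nonneg_right (ha i) (coeffSum_nonneg (hmod i j))

theorem coeffSum_sum_smul_pos (hmod : ∀ i j k, 0 ≤ m.repr (b i • m j) k) (j : κ) :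
    0 < m.coeffSum ((∑ i, b i) • m j) := by
  refine (coeffSum_nonneg (repr_sum_smul_nonneg b hmod j)).lt_of_ne' fun h => m.ne_zero j ?_
  rw [coeffSum_sum_smul, sum_eq_zero_iff_of_nonneg fun i _ => coeffSum_nonneg (hmod i j)] at h
  rw [← one_smul A (m j), smul_eq_sum_repr_smul b]
  refine sum_eq_zero fun i _ => ?_
  rw [eq_zero_of_coeffSum_eq_zero (hmod i j) (h i (mem_univ i)), smul_zero]

theorem coeffSum_sum_smul_le_of_isMin [Fintype κ] (hmod : ∀ i j k, 0 ≤ m.repr (b i • m j) k)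
    {N : ℤ} (hN : ∀ i, b.repr ((∑ i, b i) * (∑ i, b i)) i ≤ N) {j₀ : κ}
    (hmin : ∀ j, m.coeffSum ((∑ i, b i) • m j₀) ≤ m.coeffSum ((∑ i, b i) • m j)) :
    m.coeffSum ((∑ i, b i) • m j₀) ≤ N := by
  set B := ∑ i, b i
  have hlower : m.coeffSum (B • m j₀) * m.coeffSum (B • m j₀) ≤ m.coeffSum (B • B • m j₀) :=
    mul_coeffSum_le_coeffSum_smul (repr_sum_smul_nonneg b hmod j₀) hmin
  have hupper : m.coeffSum (B • B • m j₀) ≤ N * m.coeffSum (B • m j₀) := by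
    rw [← mul_smul]
    exact coeffSum_smul_le b hmod hN j₀
  exact le_of_mul_le_mul_right (hlower.trans hupper) (coeffSum_sum_smul_pos b hmod j₀)

end ZPlusModule

open ZPlusModule in
theorem irreducible_ZPlus_module_finite_rank_and_bound_general
    {A : Type} [Ring A] {ι : Type} [Fintype ι] (b : Module.Basis ι ℤ A)
    {Mc : Type} [AddCommGroup Mc] [Module A Mc]
    {κ : Type} (m : Module.Basis κ ℤ Mc)
    (hmod : ∀ (i : ι) (j k : κ), 0 ≤ m.repr (b i • m j) k)
    (hirr : ∀ J : Set κ,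
      (∀ (a : A) (x : Mc), x ∈ Submodule.span ℤ (⇑m '' J) →
        a • x ∈ Submodule.span ℤ (⇑m '' J)) → J = ∅ ∨ J = Set.univ)
    (N : ℤ)
    (hN : ∀ i, (b.repr ((∑ i, b i) * (∑ i, b i))) i ≤ N)
    (d : κ → ℤ)
    (hd : ∀ j, d j = (m.repr ((∑ i, b i) • m j)).sum fun _ v => v) :
    Finite κ ∧ ∀ j₀ : κ, (∀ j, d j₀ ≤ d j) → d j₀ ≤ N := by
  have hfin : Finite κ := finite_of_forall_isStableIndexSet b hmod hirr
  refine ⟨hfin, fun j₀ hmin => ?_⟩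
  have := Fintype.ofFinite κ
  obtain rfl : d = fun j => m.coeffSum ((∑ i, b i) • m j) :=
    funext fun j => (hd j).trans (m.coeffSum_apply _).symm
  exact coeffSum_sum_smul_le_of_isMin b hmod hN hmin

/-- Let A be a ℤ₊-ring of finite rank over ℤ (ring with a finite ℤ-basis
{b i} whose structure constants are nonnegative). Let M be an irreducible ℤ₊-module over A
with basis {m j} (structure constants of the action nonnegative).  Set b = Σᵢ bᵢ, write
b² = Σ nᵢ bᵢ and let N be an upper bound for the nᵢ.  For j in the basis of M let
d j be the sum of the coefficients of b • m j.  Then M has finite rank over ℤ, and the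
minimal value of d (attained at some j₀) satisfies d j₀ ≤ N. -/
theorem irreducible_ZPlus_module_finite_rank_and_bound
    {A : Type} [Ring A] {ι : Type} [Fintype ι] (b : Module.Basis ι ℤ A)
    (hring : ∀ i j k, 0 ≤ b.repr (b i * b j) k)
    {Mc : Type} [AddCommGroup Mc] [Module A Mc]
    {κ : Type} (m : Module.Basis κ ℤ Mc)
    (hmod : ∀ (i : ι) (j k : κ), 0 ≤ m.repr (b i • m j) k)
    (hne : Nonempty κ)
    (hirr : ∀ J : Set κ,
      (∀ (a : A) (x : Mc), x ∈ Submodule.span ℤ (⇑m '' J) →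
        a • x ∈ Submodule.span ℤ (⇑m '' J)) → J = ∅ ∨ J = Set.univ)
    (N : ℤ)
    (hN : ∀ i, (b.repr ((∑ i, b i) * (∑ i, b i))) i ≤ N)
    (d : κ → ℤ)
    (hd : ∀ j, d j = (m.repr ((∑ i, b i) • m j)).sum fun _ v => v) :
    Finite κ ∧ ∀ j₀ : κ, (∀ j, d j₀ ≤ d j) → d j₀ ≤ N :=
  irreducible_ZPlus_module_finite_rank_and_bound_general b m hmod hirr N hN d hd
end

section
/- Let C be a semisimple rigid monoidal category and M a semisimple module category over C. Then for objects M₁, M₂ of M and X of C there are canonical isomorphisms of internal Homs: Hom̲(X ⊗ M₁, M₂) ≅ Hom̲(M₁, M₂) ⊗ X* and Hom̲(M₁, X ⊗ M₂) ≅ X ⊗ Hom̲(M₁, M₂). -/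
open CategoryTheory MonoidalCategory

/-- A module category structure on a category `M` over a monoidal category `C`. -/
structure ModuleCategoryStruct (C : Type*) [Category C] [MonoidalCategory C]
    (M : Type*) [Category M] where
  smul : C ⥤ M ⥤ M
  assocIso : ∀ X Y : C, smul.obj (X ⊗ Y) ≅ smul.obj Y ⋙ smul.obj X
  unitIso : smul.obj (𝟙_ C) ≅ 𝟭 M
  assoc_natural : ∀ {X X' Y Y' : C} (f : X ⟶ X') (g : Y ⟶ Y') (m : M),
    (smul.map (f ⊗ₘ g)).app m ≫ (assocIso X' Y').hom.app m =
      (assocIso X Y).hom.app m ≫ (smul.map f).app ((smul.obj Y).obj m) ≫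
        (smul.obj X').map ((smul.map g).app m)
  pentagon : ∀ (X Y Z : C) (m : M),
    (smul.map (α_ X Y Z).hom).app m ≫ (assocIso X (Y ⊗ Z)).hom.app m ≫
        (smul.obj X).map ((assocIso Y Z).hom.app m) =
      (assocIso (X ⊗ Y) Z).hom.app m ≫
        (assocIso X Y).hom.app ((smul.obj Z).obj m)
  triangle : ∀ (X : C) (m : M),
    (smul.map (ρ_ X).hom).app m =
      (assocIso X (𝟙_ C)).hom.app m ≫ (smul.obj X).map (unitIso.hom.app m)

variable {C : Type*} [Category C] [MonoidalCategory C]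
  {M : Type*} [Category M]

/-- `h` is an internal Hom object `Hom̲(N₁, N₂)`: it represents `Y ↦ Hom(Y ⊗ N₁, N₂)`,
witnessed by a family of bijections `e` natural in `Y`. -/
def Represents (s : ModuleCategoryStruct C M) {N₁ N₂ : M} {h : C}
    (e : ∀ Y : C, ((s.smul.obj Y).obj N₁ ⟶ N₂) ≃ (Y ⟶ h)) : Prop :=
  ∀ {Y Y' : C} (g : Y' ⟶ Y) (u : (s.smul.obj Y).obj N₁ ⟶ N₂),
    e Y' ((s.smul.map g).app N₁ ≫ u) = g ≫ e Y u

/-!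
The action of `C` on `M` satisfies the axioms of a `MonoidalLeftAction`. For an exact pairing
`(X, X')` the functor `X' ⊙ -` is then left adjoint to `X ⊙ -` on `M`, just as `X' ⊗ -` is left adjoint to `X ⊗ -` on `C`. Hence,
naturally in `Y`,
`Hom(Y ⊙ X ⊙ M₁, M₂) ≃ Hom((Y ⊗ X) ⊙ M₁, M₂) ≃ Hom(Y ⊗ X, Hom̲(M₁, M₂)) ≃ Hom(Y, Hom̲(M₁, M₂) ⊗ X')`
and
`Hom(Y ⊙ M₁, X ⊙ M₂) ≃ Hom((X' ⊗ Y) ⊙ M₁, M₂) ≃ Hom(X' ⊗ Y, Hom̲(M₁, M₂)) ≃ Hom(Y, X ⊗ Hom̲(M₁, M₂))`,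
and Yoneda identifies the representing objects.
-/

namespace CategoryTheory.MonoidalCategory.MonoidalLeftAction
open scoped MonoidalLeftAction

variable {D : Type*} [Category D] [MonoidalLeftAction C D]

lemma rightUnitor_inv_actionHom (c : C) (d : D) :
    (ρ_ c).inv ⊵ₗ d ≫ (αₗ c (𝟙_ C) d).hom = c ⊴ₗ (λₗ d).inv := by
  rw [← cancel_mono (c ⊴ₗ (λₗ d).hom), Category.assoc, ← rightUnitor_actionHom,
    inv_hom_actionHomLeft, actionHomRight_inv_hom]

lemma leftUnitor_inv_actionHom (c : C) (d : D) :
    (λ_ c).inv ⊵ₗ d = (λₗ (c ⊙ₗ d)).inv ≫ (αₗ (𝟙_ C) c d).inv := by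
  rw [← cancel_mono ((λ_ c).hom ⊵ₗ d), inv_hom_actionHomLeft, leftUnitor_actionHom]
  simp

lemma associator_inv_actionHom (c₁ c₂ c₃ : C) (d : D) :
    (αₗ c₁ (c₂ ⊗ c₃) d).inv ≫ (α_ c₁ c₂ c₃).inv ⊵ₗ d =
      c₁ ⊴ₗ (αₗ c₂ c₃ d).hom ≫ (αₗ c₁ c₂ (c₃ ⊙ₗ d)).inv ≫ (αₗ (c₁ ⊗ c₂) c₃ d).inv := by
  rw [Iso.inv_comp_eq, ← cancel_epi ((α_ c₁ c₂ c₃).hom ⊵ₗ d)]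
  simp

lemma associator_actionHom' (c₁ c₂ c₃ : C) (d : D) :
    (α_ c₁ c₂ c₃).hom ⊵ₗ d ≫ (αₗ c₁ (c₂ ⊗ c₃) d).hom =
      (αₗ (c₁ ⊗ c₂) c₃ d).hom ≫ (αₗ c₁ c₂ (c₃ ⊙ₗ d)).hom ≫ c₁ ⊴ₗ (αₗ c₂ c₃ d).inv := by
  rw [← cancel_mono (c₁ ⊴ₗ (αₗ c₂ c₃ d).hom)]
  simp

variable (X X' : C) [ExactPairing X X']

def actionCoevaluation (d : D) : d ⟶ X ⊙ₗ X' ⊙ₗ d :=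
  (λₗ d).inv ≫ η_ X X' ⊵ₗ d ≫ (αₗ X X' d).hom

def actionEvaluation (d : D) : X' ⊙ₗ X ⊙ₗ d ⟶ d :=
  (αₗ X' X d).inv ≫ ε_ X X' ⊵ₗ d ≫ (λₗ d).hom

variable {X X'} in
lemma actionCoevaluation_naturality {d e : D} (f : d ⟶ e) :
    f ≫ actionCoevaluation X X' e = actionCoevaluation X X' d ≫ X ⊴ₗ X' ⊴ₗ f := by
  rw [actionCoevaluation, ← actionUnitIso_inv_naturality_assoc, action_exchange_assoc]
  simp [actionCoevaluation]

variable {X X'} in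
lemma actionEvaluation_naturality {d e : D} (f : d ⟶ e) :
    X' ⊴ₗ X ⊴ₗ f ≫ actionEvaluation X X' e = actionEvaluation X X' d ≫ f := by
  simp only [actionEvaluation, Category.assoc]
  rw [actionUnitIso_hom_naturality, ← action_exchange_assoc]
  simp

lemma actionCoevaluation_actionEvaluation (d : D) :
    X' ⊴ₗ actionCoevaluation X X' d ≫ actionEvaluation X X' (X' ⊙ₗ d) = 𝟙 _ := by
  have zigzag : X' ⊴ₗ actionCoevaluation X X' d ≫ actionEvaluation X X' (X' ⊙ₗ d) =
      ((ρ_ X').inv ≫ X' ◁ η_ X X' ≫ (α_ X' X X').inv ≫ ε_ X X' ▷ X' ≫ (λ_ X').hom) ⊵ₗ d := by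
    simp [actionCoevaluation, actionEvaluation, -ExactPairing.coevaluation_evaluation,
      -ExactPairing.coevaluation_evaluation_assoc, (reassoc_of% rightUnitor_inv_actionHom),
      (reassoc_of% associator_inv_actionHom)]
  simp [zigzag]

lemma actionEvaluation_actionCoevaluation (d : D) :
    actionCoevaluation X X' (X ⊙ₗ d) ≫ X ⊴ₗ actionEvaluation X X' d = 𝟙 _ := by
  have zigzag : actionCoevaluation X X' (X ⊙ₗ d) ≫ X ⊴ₗ actionEvaluation X X' d =
      ((λ_ X).inv ≫ η_ X X' ▷ X ≫ (α_ X X' X).hom ≫ X ◁ ε_ X X' ≫ (ρ_ X).hom) ⊵ₗ d := by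
    simp [actionCoevaluation, actionEvaluation, -ExactPairing.evaluation_coevaluation,
      -ExactPairing.evaluation_coevaluation_assoc, leftUnitor_inv_actionHom,
      (reassoc_of% associator_actionHom')]
  simp [zigzag]

def actionHomEquiv (d e : D) : (X' ⊙ₗ d ⟶ e) ≃ (d ⟶ X ⊙ₗ e) where
  toFun f := actionCoevaluation X X' d ≫ X ⊴ₗ f
  invFun g := X' ⊴ₗ g ≫ actionEvaluation X X' e
  left_inv f := by
    simp [actionEvaluation_naturality, reassoc_of% actionCoevaluation_actionEvaluation]
  right_inv g := by
    simp [← (reassoc_of% actionCoevaluation_naturality), actionEvaluation_actionCoevaluation]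

lemma actionHomEquiv_naturality {d d' e : D} (k : d' ⟶ d) (f : X' ⊙ₗ d ⟶ e) :
    actionHomEquiv X X' d' e (X' ⊴ₗ k ≫ f) = k ≫ actionHomEquiv X X' d e f := by
  simp [actionHomEquiv, (reassoc_of% actionCoevaluation_naturality)]

end CategoryTheory.MonoidalCategory.MonoidalLeftAction

namespace ModuleCategoryStruct

variable (s : ModuleCategoryStruct C M)

instance : (s.smul.obj (𝟙_ C)).Faithful :=
  Functor.Faithful.of_iso s.unitIso.symm

/- Not an axiom of `ModuleCategoryStruct`; as in Kelly's proof for monoidal categories it follows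
from the pentagon at `(𝟙_ C, 𝟙_ C, Y)` and the two triangles, after cancelling the faithful
functor `𝟙_ C ⊙ -`. -/
lemma map_leftUnitor_hom_app (Y : C) (m : M) :
    (s.smul.map (λ_ Y).hom).app m =
      (s.assocIso (𝟙_ C) Y).hom.app m ≫ s.unitIso.hom.app ((s.smul.obj Y).obj m) := by
  apply (s.smul.obj (𝟙_ C)).map_injective
  rw [← cancel_epi ((s.smul.map (α_ (𝟙_ C) (𝟙_ C) Y).hom).app m ≫
    (s.assocIso (𝟙_ C) (𝟙_ C ⊗ Y)).hom.app m)]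
  have whisker := s.assoc_natural (𝟙 (𝟙_ C)) (λ_ Y).hom m
  have unitor := s.assoc_natural (ρ_ (𝟙_ C)).hom (𝟙 Y) m
  simp only [id_tensorHom, tensorHom_id, CategoryTheory.Functor.map_id, NatTrans.id_app,
    Functor.comp_obj, Category.id_comp, Category.comp_id] at whisker unitor
  calc _ = (s.smul.map ((α_ (𝟙_ C) (𝟙_ C) Y).hom ≫ 𝟙_ C ◁ (λ_ Y).hom)).app m ≫
        (s.assocIso (𝟙_ C) Y).hom.app m := by
        simp only [CategoryTheory.Functor.map_comp, NatTrans.comp_app, Category.assoc, whisker]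
    _ = (s.assocIso (𝟙_ C ⊗ 𝟙_ C) Y).hom.app m ≫ (s.assocIso (𝟙_ C) (𝟙_ C)).hom.app _ ≫
        (s.smul.obj (𝟙_ C)).map (s.unitIso.hom.app _) := by
        rw [MonoidalCategory.triangle, unitor, s.triangle]
    _ = _ := by
        simp only [CategoryTheory.Functor.map_comp, Category.assoc]
        rw [reassoc_of% (s.pentagon (𝟙_ C) (𝟙_ C) Y m)]

abbrev toMonoidalLeftAction : MonoidalLeftAction C M where
  actionObj c d := (s.smul.obj c).obj d
  actionHomLeft f d := (s.smul.map f).app d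
  actionHomRight c _ _ g := (s.smul.obj c).map g
  actionAssocIso c c' d := (s.assocIso c c').app d
  actionUnitIso d := s.unitIso.app d
  actionAssocIso_hom_naturality {_ _ _ _ d₁ _} f g h := by
    dsimp
    rw [Category.assoc, (s.assocIso _ _).hom.naturality h, reassoc_of% (s.assoc_natural f g d₁)]
    simp
  whiskerLeft_actionHomLeft c _ _ f d := by
    simpa using s.assoc_natural (𝟙 c) f d =≫ (s.assocIso _ _).inv.app d
  whiskerRight_actionHomLeft c f d := by
    simpa using s.assoc_natural f (𝟙 c) d =≫ (s.assocIso _ _).inv.app d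
  associator_actionHom := s.pentagon
  leftUnitor_actionHom := s.map_leftUnitor_hom_app
  rightUnitor_actionHom := s.triangle

end ModuleCategoryStruct

section InternalHom

open MonoidalLeftAction

variable {s : ModuleCategoryStruct C M} {N₁ N₂ : M} {h : C}
  {e : ∀ Y : C, ((s.smul.obj Y).obj N₁ ⟶ N₂) ≃ (Y ⟶ h)}

lemma represents_iff_symm_comp : Represents s e ↔ ∀ {Y Y' : C} (g : Y' ⟶ Y) (v : Y ⟶ h),
    (e Y').symm (g ≫ v) = (s.smul.map g).app N₁ ≫ (e Y).symm v := by
  refine ⟨fun he Y Y' g v => ?_, fun he Y Y' g u => ?_⟩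
  · rw [Equiv.symm_apply_eq, he, Equiv.apply_symm_apply]
  · rw [← Equiv.eq_symm_apply, he, Equiv.symm_apply_apply]

def Represents.uniqueUpToIso {h' : C} {e' : ∀ Y : C, ((s.smul.obj Y).obj N₁ ⟶ N₂) ≃ (Y ⟶ h')}
    (he : Represents s e) (he' : Represents s e') : h ≅ h' :=
  Yoneda.ext h h' (fun v => e' _ ((e _).symm v)) (fun v => e _ ((e' _).symm v))
    (by simp) (by simp) (fun g v => by rw [represents_iff_symm_comp.1 he, he'])

lemma Represents.exists_smul_source (he : Represents s e) (X X' : C) [ExactPairing X X'] :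
    ∃ e' : ∀ Y : C, ((s.smul.obj Y).obj ((s.smul.obj X).obj N₁) ⟶ N₂) ≃ (Y ⟶ h ⊗ X'),
      Represents s e' := by
  let := s.toMonoidalLeftAction
  refine ⟨fun Y => ((tensorRightHomEquiv Y X X' h).symm.trans ((e (Y ⊗ X)).symm.trans
    ((αₗ Y X N₁).homCongr (Iso.refl N₂)))).symm, ?_⟩
  rw [represents_iff_symm_comp]
  intro Y Y' g v
  simp only [Equiv.symm_symm, Equiv.trans_apply, tensorRightHomEquiv_symm_naturality,
    represents_iff_symm_comp.1 he, Iso.homCongr_apply, Iso.refl_hom, Category.comp_id]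
  -- `key` is in action notation and the goal in `s.smul` terms: they agree only up to defeq.
  have key : g ⊵ₗ (X ⊙ₗ N₁) ≫ (αₗ Y X N₁).inv = (αₗ Y' X N₁).inv ≫ (g ▷ X) ⊵ₗ N₁ := by simp
  exact ((reassoc_of% key) _).symm

lemma Represents.exists_smul_target (he : Represents s e) (X X' : C) [ExactPairing X X'] :
    ∃ e' : ∀ Y : C, ((s.smul.obj Y).obj N₁ ⟶ (s.smul.obj X).obj N₂) ≃ (Y ⟶ X ⊗ h),
      Represents s e' := by
  let := s.toMonoidalLeftAction
  refine ⟨fun Y => ((tensorLeftHomEquiv Y X X' h).symm.trans ((e (X' ⊗ Y)).symm.trans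
    ((αₗ X' Y N₁).homCongr (Iso.refl N₂)))).trans (actionHomEquiv X X' _ _) |>.symm, ?_⟩
  rw [represents_iff_symm_comp]
  intro Y Y' g v
  simp only [Equiv.symm_symm, Equiv.trans_apply, tensorLeftHomEquiv_symm_naturality,
    represents_iff_symm_comp.1 he, Iso.homCongr_apply, Iso.refl_hom, Category.comp_id]
  have key : (αₗ X' Y' N₁).inv ≫ (X' ◁ g) ⊵ₗ N₁ = X' ⊴ₗ g ⊵ₗ N₁ ≫ (αₗ X' Y N₁).inv := by simp
  exact (congrArg _ ((reassoc_of% key) _)).trans (actionHomEquiv_naturality X X' _ _)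

end InternalHom

/-- Lemma 5, (3) and (4): for a (semisimple) rigid monoidal category `C`
and a (semisimple) module category `M` over it, with internal Hom objects
`h12 = Hom̲(M₁,M₂)`, `hX2 = Hom̲(X ⊗ M₁, M₂)` and `h1X = Hom̲(M₁, X ⊗ M₂)`, there are
canonical isomorphisms `Hom̲(X ⊗ M₁, M₂) ≅ Hom̲(M₁,M₂) ⊗ Xᘁ` and
`Hom̲(M₁, X ⊗ M₂) ≅ X ⊗ Hom̲(M₁,M₂)`. -/
theorem internal_hom_twist
    [RigidCategory C] (s : ModuleCategoryStruct C M)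
    (M₁ M₂ : M) (X : C) (h12 hX2 h1X : C)
    (e12 : ∀ Y : C, ((s.smul.obj Y).obj M₁ ⟶ M₂) ≃ (Y ⟶ h12))
    (he12 : Represents s e12)
    (eX2 : ∀ Y : C, ((s.smul.obj Y).obj ((s.smul.obj X).obj M₁) ⟶ M₂) ≃ (Y ⟶ hX2))
    (heX2 : Represents s eX2)
    (e1X : ∀ Y : C, ((s.smul.obj Y).obj M₁ ⟶ (s.smul.obj X).obj M₂) ≃ (Y ⟶ h1X))
    (he1X : Represents s e1X) :
    Nonempty (hX2 ≅ h12 ⊗ (Xᘁ)) ∧ Nonempty (h1X ≅ X ⊗ h12) := by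
  obtain ⟨eSource, heSource⟩ := he12.exists_smul_source X (Xᘁ)
  obtain ⟨eTarget, heTarget⟩ := he12.exists_smul_target X (Xᘁ)
  exact ⟨⟨heX2.uniqueUpToIso heSource⟩, ⟨he1X.uniqueUpToIso heTarget⟩⟩
end

section
/- Let G be a finite group, k an algebraically closed field of characteristic not dividing |G|, and A an indecomposable semisimple G-algebra over k (an algebra in Rep(G) that is semisimple as a k-algebra). Then there is a subgroup H ≤ G, a minimal central idempotent e of A with stabilizer H, such that eAe is H-invariant, eAe ≅ End(V) for some projective representation V of H, and A ≅ Ind_H^G(eAe). -/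
/-!
Let `e` be a minimal central idempotent of `A` and `H` its stabilizer. The translates `g • e` are
minimal central idempotents, pairwise orthogonal when distinct, so `|H|⁻¹ ∑_g g • e` is a
`G`-invariant central idempotent; it is nonzero, hence `1` by indecomposability. Consequently
`a ↦ (g ↦ e (g⁻¹ • a) e)` has the inverse `f ↦ |H|⁻¹ ∑_g g • f g` on the functions satisfying the
induction conditions. By Wedderburn–Artin the block of `e` is a matrix algebra `Mₙ(k)`, on which
`H` acts by automorphisms; by Skolem–Noether each of them is conjugation by some `ρ h`, unique up
to a scalar, so `ρ` is a projective representation.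
-/

/-- A minimal central idempotent of a ring. -/
def IsMinCentralIdem {A : Type*} [Ring A] (e : A) : Prop :=
  e ≠ 0 ∧ e * e = e ∧ e ∈ Subring.center A ∧
    ∀ f, f ∈ Subring.center A → f * f = f → f * e = f → f = 0 ∨ f = e

theorem map_mem_center_iff {A B F : Type*} [Ring A] [Ring B] [EquivLike F A B]
    [RingEquivClass F A B] (φ : F) {x : A} :
    φ x ∈ Subring.center B ↔ x ∈ Subring.center A := by
  simp only [Subring.mem_center_iff]
  refine ⟨fun h y => EquivLike.injective φ (by simp only [map_mul, h]), fun h y => ?_⟩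
  obtain ⟨y, rfl⟩ := EquivLike.surjective φ y
  simp only [← map_mul, h]

namespace IsMinCentralIdem

variable {A : Type*} [Ring A] {e : A}

theorem mul_self (he : IsMinCentralIdem e) : e * e = e := he.2.1

theorem mem_center (he : IsMinCentralIdem e) : e ∈ Subring.center A := he.2.2.1

theorem commute (he : IsMinCentralIdem e) (x : A) : x * e = e * x :=
  Subring.mem_center_iff.mp he.mem_center x

theorem mul_mul_self (he : IsMinCentralIdem e) (x : A) : e * x * e = e * x := by
  rw [mul_assoc, he.commute, ← mul_assoc, he.mul_self]

theorem corner_mul (he : IsMinCentralIdem e) (x y : A) :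
    e * (x * y) * e = e * x * e * (e * y * e) := by
  rw [he.mul_mul_self, he.mul_mul_self, he.mul_mul_self, ← mul_assoc (e * x) e y,
    he.mul_mul_self, mul_assoc]

theorem map {B F : Type*} [Ring B] [EquivLike F A B] [RingEquivClass F A B]
    (he : IsMinCentralIdem e) (φ : F) : IsMinCentralIdem (φ e) := by
  obtain ⟨he0, hee, hec, hmin⟩ := he
  have inj := EquivLike.injective φ
  refine ⟨(map_ne_zero_iff φ inj).mpr he0, by rw [← map_mul, hee],
    (map_mem_center_iff φ).mpr hec, fun f hfc hff hfe => ?_⟩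
  obtain ⟨f, rfl⟩ := EquivLike.surjective φ f
  rw [map_mem_center_iff] at hfc
  rw [← map_mul, inj.eq_iff] at hff hfe
  rcases hmin f hfc hff hfe with rfl | rfl
  · exact .inl (map_zero φ)
  · exact .inr rfl

theorem mul_eq_zero_of_ne {e' : A} (he : IsMinCentralIdem e) (he' : IsMinCentralIdem e')
    (hne : e ≠ e') : e * e' = 0 := by
  have hc : e * e' ∈ Subring.center A := Subring.mul_mem _ he.mem_center he'.mem_center
  have hidem : e * e' * (e * e') = e * e' := by
    rw [← mul_assoc, he.mul_mul_self, mul_assoc, he'.mul_self]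
  have hle : e * e' * e = e * e' := he.mul_mul_self e'
  have hle' : e * e' * e' = e * e' := by rw [mul_assoc, he'.mul_self]
  rcases he.2.2.2 _ hc hidem hle with h | h
  · exact h
  rcases he'.2.2.2 _ hc hidem hle' with h' | h'
  · exact h'
  · exact absurd (h.symm.trans h') hne

end IsMinCentralIdem

theorem finrank_range_mulLeft_lt (k : Type*) {A : Type*} [Field k] [Ring A] [Algebra k A]
    [FiniteDimensional k A] {e f : A} (hff : f * f = f) (hef : e * f = f) (hfe : f * e = f)
    (hne : f ≠ e) :
    Module.finrank k (LinearMap.range (LinearMap.mulLeft k f)) <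
      Module.finrank k (LinearMap.range (LinearMap.mulLeft k e)) := by
  refine Submodule.finrank_lt_finrank_of_lt (lt_of_le_of_ne ?_ fun h => ?_)
  · rintro _ ⟨x, rfl⟩
    exact ⟨f * x, by simp only [LinearMap.mulLeft_apply, ← mul_assoc, hef]⟩
  · obtain ⟨x, hx⟩ : e - f ∈ LinearMap.range (LinearMap.mulLeft k f) :=
      h ▸ ⟨1 - f, by simp only [LinearMap.mulLeft_apply, mul_sub, mul_one, hef]⟩
    simp only [LinearMap.mulLeft_apply] at hx
    have : e - f = 0 := by
      rw [← hx, ← hff, mul_assoc, hx, mul_sub, hfe, hff, sub_self]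
    exact hne (sub_eq_zero.mp this).symm

theorem exists_isMinCentralIdem (k : Type*) {A : Type*} [Field k] [Ring A] [Algebra k A]
    [FiniteDimensional k A] [Nontrivial A] : ∃ e : A, IsMinCentralIdem e := by
  let S : Set A := {e | e ≠ 0 ∧ e * e = e ∧ e ∈ Subring.center A}
  obtain ⟨e, ⟨he0, hee, hec⟩, hmin⟩ := (measure fun e : A =>
    Module.finrank k (LinearMap.range (LinearMap.mulLeft k e))).wf.has_min S
    ⟨1, one_ne_zero, mul_one 1, Subring.one_mem _⟩
  refine ⟨e, he0, hee, hec, fun f hfc hff hfe => or_iff_not_imp_left.mpr fun hf0 => ?_⟩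
  by_contra hne
  have hef : e * f = f := by rw [Subring.mem_center_iff.mp hfc e, hfe]
  exact hmin f ⟨hf0, hff, hfc⟩ (finrank_range_mulLeft_lt k hff hef hfe hne)

-- `R * P` is then a nonzero two-sided ideal.
theorem IsSimpleRing.exists_mul_eq_one_of_normalizing {R : Type*} [Ring R] [IsSimpleRing R]
    {P : R} (hP : P ≠ 0) (h : ∀ X, ∃ Y, P * X = Y * P) : ∃ Y, Y * P = 1 := by
  let J : TwoSidedIdeal R := .mk' {x | ∃ Y, Y * P = x} ⟨0, zero_mul P⟩
    (by rintro _ _ ⟨Y, rfl⟩ ⟨Y', rfl⟩; exact ⟨Y + Y', add_mul ..⟩)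
    (by rintro _ ⟨Y, rfl⟩; exact ⟨-Y, neg_mul ..⟩)
    (by rintro X _ ⟨Y, rfl⟩; exact ⟨X * Y, mul_assoc ..⟩)
    (by
      rintro _ X ⟨Y, rfl⟩
      obtain ⟨Z, hZ⟩ := h X
      exact ⟨Y * Z, by rw [mul_assoc, mul_assoc, hZ]⟩)
  have hmem : ∀ x, x ∈ J ↔ ∃ Y, Y * P = x := TwoSidedIdeal.mem_mk' _ _ _ _ _ _
  obtain hJ | hJ := eq_bot_or_eq_top J
  · exact absurd ((TwoSidedIdeal.mem_bot R).mp (hJ ▸ (hmem P).mpr ⟨1, one_mul P⟩)) hP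
  · exact (hmem 1).mp (hJ ▸ TwoSidedIdeal.mem_top R)

namespace Matrix

variable {k n : Type*} [Field k] [Fintype n] [DecidableEq n]

theorem exists_eq_smul_one_of_forall_commute {W : Matrix n n k} (h : ∀ X, X * W = W * X) :
    ∃ c : k, W = c • 1 := by
  obtain ⟨c, rfl⟩ : W ∈ Set.range (scalar n) :=
    center_eq_range (n := n) (R := k) ▸ Semigroup.mem_center_iff.mpr h
  exact ⟨c, by rw [scalar_apply, smul_one_eq_diagonal]⟩

theorem mul_single_eq_sum (X : Matrix n n k) (y b : n) :
    X * single y b 1 = ∑ l, X l y • single l b 1 := by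
  ext i j
  simp [mul_apply, single_apply, sum_apply, ite_and]

/-- **Skolem–Noether** for `Matrix n n k`: every automorphism is inner. -/
theorem exists_isUnit_forall_mul_eq_mul [Nonempty n] (α : Matrix n n k ≃ₐ[k] Matrix n n k) :
    ∃ P, IsUnit P ∧ ∀ X, α X * P = P * X := by
  obtain ⟨b⟩ := ‹Nonempty n›
  -- column `y` of the intertwiner is column `c` of `α (single y b 1)`
  have hint : ∀ c X, α X * of (fun x y => α (single y b 1) x c) =
      of (fun x y => α (single y b 1) x c) * X := by
    intro c X
    ext x y
    calc (α X * of fun x y => α (single y b 1) x c) x y = (α X * α (single y b 1)) x c := by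
          simp [mul_apply]
      _ = ∑ l, X l y * α (single l b 1) x c := by
          simp only [← map_mul, mul_single_eq_sum, map_sum, map_smul, sum_apply, smul_apply,
            smul_eq_mul]
      _ = _ := by simp [mul_apply, mul_comm]
  obtain ⟨x, c, hxc⟩ : ∃ x c, α (single b b 1) x c ≠ 0 := by
    by_contra! h
    have := congrFun₂ (α.injective (by ext x c; simp [h]) : single b b (1 : k) = 0) b b
    simp at this
  have hP : of (fun x y => α (single y b 1) x c) ≠ 0 := fun h0 => hxc (congrFun₂ h0 x b)
  obtain ⟨Y, hY⟩ :=
    IsSimpleRing.exists_mul_eq_one_of_normalizing hP fun X => ⟨α X, (hint c X).symm⟩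
  exact ⟨_, isUnit_iff_exists_inv'.mpr ⟨Y, hY⟩, hint c⟩

theorem exists_eq_smul_of_forall_mul_eq_mul [Nonempty n] (α : Matrix n n k → Matrix n n k)
    {P Q : Matrix n n k} (hP : IsUnit P) (hQ : IsUnit Q) (hαP : ∀ X, α X * P = P * X)
    (hαQ : ∀ X, α X * Q = Q * X) : ∃ c : k, c ≠ 0 ∧ P = c • Q := by
  obtain ⟨u, rfl⟩ := hQ
  set v : Matrix n n k := ↑u⁻¹
  have hu : ∀ X, X * v = v * α X := fun X => by
    calc X * v = v * (u * X) * v := by simp [v, ← mul_assoc]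
      _ = v * α X := by rw [← hαQ]; simp [v, mul_assoc]
  obtain ⟨c, hc⟩ := exists_eq_smul_one_of_forall_commute (W := v * P) fun X => by
    rw [← mul_assoc, hu, mul_assoc, hαP, mul_assoc]
  have hPc : P = c • u := by
    calc P = u * (v * P) := by simp [v, ← mul_assoc]
      _ = c • u := by rw [hc, mul_smul_comm, mul_one]
  refine ⟨c, fun hc0 => hP.ne_zero ?_, hPc⟩
  rw [hPc, hc0, zero_smul]

theorem exists_projectiveRep [Nonempty n] {H : Type*} [Monoid H]
    (α : H →* (Matrix n n k ≃ₐ[k] Matrix n n k)) :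
    ∃ ρ : H → Matrix n n k, (∀ h, IsUnit (ρ h)) ∧
      (∀ h₁ h₂, ∃ c : k, c ≠ 0 ∧ ρ (h₁ * h₂) = c • (ρ h₁ * ρ h₂)) ∧
      ∀ h X, α h X * ρ h = ρ h * X := by
  choose ρ hρu hρ using fun h => exists_isUnit_forall_mul_eq_mul (α h)
  refine ⟨ρ, hρu, fun h₁ h₂ => exists_eq_smul_of_forall_mul_eq_mul (α (h₁ * h₂)) (hρu _)
    ((hρu h₁).mul (hρu h₂)) (hρ _) fun X => ?_, hρ⟩
  rw [map_mul, AlgEquiv.mul_apply, ← mul_assoc, hρ, mul_assoc, hρ, mul_assoc]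

end Matrix

theorem IsMinCentralIdem.exists_eq_single_one {k ι : Type*} [Field k] [DecidableEq ι]
    {n : ι → Type*} [∀ i, Fintype (n i)] [∀ i, DecidableEq (n i)] [∀ i, Nonempty (n i)]
    {u : Π i, Matrix (n i) (n i) k} (hu : IsMinCentralIdem u) : ∃ i, u = Pi.single i 1 := by
  obtain ⟨i, hi⟩ : ∃ i, u i ≠ 0 := Function.ne_iff.mp hu.1
  obtain ⟨c, hc⟩ := Matrix.exists_eq_smul_one_of_forall_commute (W := u i) fun X => by
    simpa using congrFun (hu.commute (Pi.single i X)) i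
  have hc1 : c = 1 := by
    obtain ⟨j⟩ := ‹∀ i, Nonempty (n i)› i
    have hcc : c * c = c := by simpa [hc] using congrFun₂ (congrFun hu.mul_self i) j j
    have hc0 : c ≠ 0 := by rintro rfl; exact hi (by simp [hc])
    simpa [hc0] using hcc
  have hcen : (Pi.single i 1 : Π i, Matrix (n i) (n i) k) ∈ Subring.center _ :=
    Subring.mem_center_iff.mpr fun X => by
      ext j : 1
      by_cases hj : j = i
      · subst hj; simp
      · simp [hj]
  have hle : Pi.single i 1 * u = Pi.single i 1 := by
    ext j : 1
    by_cases hj : j = i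
    · subst hj; simp [hc, hc1]
    · simp [hj]
  rcases hu.2.2.2 _ hcen (by rw [← Pi.single_mul, mul_one]) hle with h | h
  · exact absurd (congrFun h i) (by simp)
  · exact ⟨i, h.symm⟩

/-- The projection, through Wedderburn–Artin, of `A` onto the block of `e`. -/
theorem IsMinCentralIdem.exists_surjective_algHom_matrix {k A : Type*} [Field k]
    [IsAlgClosed k] [Ring A] [Algebra k A] [FiniteDimensional k A] [IsSemisimpleRing A] {e : A}
    (he : IsMinCentralIdem e) :
    ∃ (n : ℕ) (π : A →ₐ[k] Matrix (Fin n) (Fin n) k), 0 < n ∧ Function.Surjective π ∧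
      π e = 1 ∧ ∀ x, π x = 0 ↔ e * x = 0 := by
  classical
  obtain ⟨m, d, hd, ⟨Φ⟩⟩ := IsSemisimpleRing.exists_algEquiv_pi_matrix_of_isAlgClosed k A
  obtain ⟨i, hi⟩ := (he.map Φ).exists_eq_single_one
  have hΦ : ∀ x, Φ (e * x) = Pi.single i (Φ x i) := fun x => by
    rw [map_mul, hi]
    ext j : 1
    by_cases hj : j = i
    · subst hj; simp
    · simp [hj]
  refine ⟨d i, (Pi.evalAlgHom k _ i).comp Φ.toAlgHom, Nat.pos_of_neZero _,
    fun X => ⟨Φ.symm (Pi.single i X), by simp⟩, by simp [hi], fun x => ?_⟩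
  rw [← map_eq_zero_iff Φ Φ.injective, hΦ]
  simp

theorem AlgHom.exists_algEquiv_apply_eq {k A B : Type*} [CommRing k] [Ring A] [Ring B]
    [Algebra k A] [Algebra k B] (π : A →ₐ[k] B) (hπ : Function.Surjective π) (φ : A ≃ₐ[k] A)
    (hφ : ∀ x, π (φ x) = 0 ↔ π x = 0) : ∃ β : B ≃ₐ[k] B, ∀ x, β (π x) = π (φ x) := by
  let q := Ideal.quotientKerAlgEquivOfSurjective hπ
  let β : B →ₐ[k] B := (Ideal.Quotient.liftₐ _ (π.comp φ.toAlgHom) fun x hx =>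
    (hφ x).mpr hx).comp q.symm.toAlgHom
  have hβ : ∀ x, β (π x) = π (φ x) := fun x => by
    have : q.symm (π x) = Ideal.Quotient.mk _ x := q.symm_apply_eq.mpr rfl
    simp only [β, AlgHom.comp_apply, AlgEquiv.coe_toAlgHom, this]
    rfl
  have hinj : Function.Injective β := by
    intro X Y hXY
    obtain ⟨x, rfl⟩ := hπ X
    obtain ⟨y, rfl⟩ := hπ Y
    rw [hβ, hβ] at hXY
    rw [← sub_eq_zero, ← map_sub, ← hφ, map_sub, map_sub, hXY, sub_self]
  have hsurj : Function.Surjective β := fun X => by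
    obtain ⟨x, rfl⟩ := hπ X
    exact ⟨π (φ.symm x), by simp [hβ]⟩
  exact ⟨AlgEquiv.ofBijective β ⟨hinj, hsurj⟩, hβ⟩

theorem AlgHom.exists_projectiveRep {k A n H : Type*} [Field k] [Ring A] [Algebra k A]
    [Fintype n] [DecidableEq n] [Nonempty n] [Group H] (π : A →ₐ[k] Matrix n n k)
    (hπ : Function.Surjective π) (τ : H →* (A ≃ₐ[k] A))
    (hτ : ∀ h x, π x = 0 → π (τ h x) = 0) :
    ∃ ρ : H → Matrix n n k, (∀ h, IsUnit (ρ h)) ∧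
      (∀ h₁ h₂, ∃ c : k, c ≠ 0 ∧ ρ (h₁ * h₂) = c • (ρ h₁ * ρ h₂)) ∧
      ∀ h x, π (τ h x) * ρ h = ρ h * π x := by
  choose β hβ using fun h => π.exists_algEquiv_apply_eq hπ (τ h) fun x =>
    ⟨fun hx => by simpa using hτ h⁻¹ _ hx, hτ h x⟩
  let α : H →* (Matrix n n k ≃ₐ[k] Matrix n n k) := MonoidHom.mk' β fun h₁ h₂ =>
    AlgEquiv.ext fun X => by
      obtain ⟨x, rfl⟩ := hπ X
      simp [hβ]
  obtain ⟨ρ, hρu, hρc, hρ⟩ := Matrix.exists_projectiveRep α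
  exact ⟨ρ, hρu, hρc, fun h x => by simpa [α, hβ] using hρ h (π x)⟩

theorem Subgroup.natCast_card_ne_zero {k G : Type*} [NonAssocSemiring k] [Group G]
    (H : Subgroup G) (hG : (Nat.card G : k) ≠ 0) : (Nat.card H : k) ≠ 0 := by
  obtain ⟨m, hm⟩ := H.card_subgroup_dvd_card
  exact left_ne_zero_of_mul (by rwa [← Nat.cast_mul, ← hm])

theorem Subgroup.sum_ite_mem {G M : Type*} [Group G] [Fintype G] [AddCommMonoid M]
    (H : Subgroup G) [DecidablePred (· ∈ H)] (a : M) :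
    ∑ g : G, (if g ∈ H then a else 0) = Nat.card H • a := by
  simp [Finset.sum_ite, Nat.card_eq_fintype_card, Fintype.card_subtype]

namespace IsMinCentralIdem

variable {k G A : Type*} [Field k] [Group G] [Ring A] [Algebra k A]
  {σ : G →* (A ≃ₐ[k] A)} {e : A} {H : Subgroup G}

theorem mul_map_eq_zero (he : IsMinCentralIdem e) (hH : ∀ g, g ∈ H ↔ σ g e = e) {g : G}
    (hg : g ∉ H) : e * σ g e = 0 :=
  he.mul_eq_zero_of_ne (he.map (σ g)) fun h => hg ((hH g).mpr h.symm)

theorem sum_map_mul_self [Fintype G] (he : IsMinCentralIdem e)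
    (hH : ∀ g, g ∈ H ↔ σ g e = e) : ∑ g, σ g e * e = Nat.card H • e := by
  classical
  rw [← H.sum_ite_mem]
  refine Finset.sum_congr rfl fun g _ => ?_
  split_ifs with hg
  · rw [(hH g).mp hg, he.mul_self]
  · rw [he.commute, he.mul_map_eq_zero hH hg]

theorem sum_map_eq_card_smul_one [Fintype G] (he : IsMinCentralIdem e)
    (hH : ∀ g, g ∈ H ↔ σ g e = e)
    (hindec : ∀ c, c ∈ Subring.center A → c * c = c → (∀ g, σ g c = c) → c = 0 ∨ c = 1)
    (hN : (Nat.card H : k) ≠ 0) : ∑ g, σ g e = (Nat.card H : k) • 1 := by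
  set N : k := (Nat.card H : k)
  set s := ∑ g, σ g e
  have hinv : ∀ x, σ x s = s := fun x => by
    simp only [s, map_sum]
    exact Fintype.sum_equiv (Equiv.mulLeft x) _ _ fun g => by simp [map_mul]
  have hse : s * e = N • e := by
    rw [Finset.sum_mul, he.sum_map_mul_self hH, Nat.cast_smul_eq_nsmul]
  have hss : s * s = N • s := by
    calc s * s = ∑ g, σ g (e * s) := by simp only [Finset.sum_mul, map_mul, hinv, s]
      _ = N • s := by simp only [← he.commute, hse, map_smul, ← Finset.smul_sum, s]
  have hs : s ∈ Subring.center A :=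
    Subring.sum_mem _ fun g _ => (map_mem_center_iff (σ g)).mpr he.mem_center
  let c := N⁻¹ • s
  have hc : c ∈ Subring.center A := Subring.mem_center_iff.mpr fun x => by
    rw [mul_smul_comm, smul_mul_assoc, Subring.mem_center_iff.mp hs x]
  have hcc : c * c = c := by
    rw [smul_mul_smul_comm, hss, smul_smul, inv_mul_cancel_right₀ hN]
  have hce : c * e = e := by rw [smul_mul_assoc, hse, smul_smul, inv_mul_cancel₀ hN, one_smul]
  rcases hindec c hc hcc fun g => by rw [map_smul, hinv] with h | h
  · exact absurd (by rw [← hce, h, zero_mul]) he.1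
  · rw [← h, smul_smul, mul_inv_cancel₀ hN, one_smul]

theorem inv_card_smul_sum_map_mul_map_inv [Fintype G] (he : IsMinCentralIdem e)
    (hH : ∀ g, g ∈ H ↔ σ g e = e)
    (hindec : ∀ c, c ∈ Subring.center A → c * c = c → (∀ g, σ g c = c) → c = 0 ∨ c = 1)
    (hN : (Nat.card H : k) ≠ 0) (a : A) :
    (Nat.card H : k)⁻¹ • ∑ g, σ g (e * σ g⁻¹ a * e) = a := by
  have : ∀ g, σ g (e * σ g⁻¹ a * e) = σ g e * a := fun g => by
    rw [map_mul, map_mul, ← AlgEquiv.mul_apply, ← map_mul, mul_inv_cancel, map_one,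
      AlgEquiv.one_apply, (he.map (σ g)).mul_mul_self]
  simp only [this, ← Finset.sum_mul, he.sum_map_eq_card_smul_one hH hindec hN, smul_mul_assoc,
    one_mul, smul_smul, inv_mul_cancel₀ hN, one_smul]

theorem mul_map_inv_smul_sum_mul [Fintype G] (he : IsMinCentralIdem e)
    (hH : ∀ g, g ∈ H ↔ σ g e = e)
    (hN : (Nat.card H : k) ≠ 0) {f : G → A} (hfe : ∀ g, f g = e * f g * e)
    (hfH : ∀ g h, h ∈ H → f (g * h) = σ h⁻¹ (f g)) (x : G) :
    e * σ x⁻¹ ((Nat.card H : k)⁻¹ • ∑ g, σ g (f g)) * e = f x := by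
  classical
  have hterm : ∀ h, e * σ h (f (x * h)) * e = if h ∈ H then f x else 0 := fun h => by
    split_ifs with hh
    · rw [hfH x h hh, ← AlgEquiv.mul_apply, ← map_mul, mul_inv_cancel, map_one,
        AlgEquiv.one_apply, ← hfe]
    · rw [hfe (x * h), map_mul, map_mul, ← mul_assoc, ← mul_assoc, he.mul_map_eq_zero hH hh,
        zero_mul, zero_mul, zero_mul]
  have hsum : ∑ g, e * σ x⁻¹ (σ g (f g)) * e = ∑ h, e * σ h (f (x * h)) * e :=
    Fintype.sum_equiv (Equiv.mulLeft x⁻¹) _ _ fun g => by simp [map_mul]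
  rw [map_smul, map_sum, mul_smul_comm, smul_mul_assoc, Finset.mul_sum, Finset.sum_mul, hsum]
  simp only [hterm, H.sum_ite_mem, ← Nat.cast_smul_eq_nsmul k, smul_smul, inv_mul_cancel₀ hN,
    one_smul]

theorem range_mul_map_inv_mul [Fintype G] (he : IsMinCentralIdem e)
    (hH : ∀ g, g ∈ H ↔ σ g e = e) (hN : (Nat.card H : k) ≠ 0) :
    Set.range (fun a : A => fun g : G => e * σ g⁻¹ a * e) =
      {f : G → A | (∀ g, f g = e * f g * e) ∧ ∀ g h, h ∈ H → f (g * h) = σ h⁻¹ (f g)} := by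
  ext f
  refine ⟨?_, fun ⟨hfe, hfH⟩ => ⟨_, funext (he.mul_map_inv_smul_sum_mul hH hN hfe hfH)⟩⟩
  rintro ⟨a, rfl⟩
  refine ⟨fun g => by simp only [he.mul_mul_self, ← mul_assoc, he.mul_self], fun g h hh => ?_⟩
  simp only [mul_inv_rev, map_mul, AlgEquiv.mul_apply, (hH _).mp (H.inv_mem hh)]

end IsMinCentralIdem

/-- Theorem 2, structure part: let G be a finite group, k an algebraically
closed field with char k ∤ |G|, and A an indecomposable semisimple G-algebra over k
(no nontrivial G-invariant central idempotents).  Then there are a subgroup H ≤ G and a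
minimal central idempotent e of A with stabilizer H, such that the corner eAe is
H-invariant, eAe is isomorphic to a matrix algebra End(V) on which H acts by conjugation
by a projective representation ρ, and A ≅ Ind_H^G(eAe) via a ↦ (g ↦ e (g⁻¹·a) e). -/
theorem indecomposable_G_algebra_structure
    {k : Type} [Field k] [IsAlgClosed k]
    {G : Type} [Group G] [Fintype G] (hchar : (Fintype.card G : k) ≠ 0)
    {A : Type} [Ring A] [Algebra k A] [FiniteDimensional k A] [IsSemisimpleRing A]
    (σ : G →* (A ≃ₐ[k] A))
    (hindec : ∀ c, c ∈ Subring.center A → c * c = c → (∀ g, σ g c = c) →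
      c = 0 ∨ c = 1) (hA : (1 : A) ≠ 0) :
    ∃ (H : Subgroup G) (e : A), IsMinCentralIdem e ∧
      (∀ g, g ∈ H ↔ σ g e = e) ∧
      -- the corner eAe is H-invariant
      (∀ h ∈ H, ∀ a, σ h (e * a * e) = e * (σ h a) * e) ∧
      -- eAe ≅ End(V) = M_n(k), with the H-action given by conjugation by a
      -- projective representation ρ of H
      (∃ (n : ℕ) (ψ : A → Matrix (Fin n) (Fin n) k),
        0 < n ∧
        (∀ x y, ψ (x + y) = ψ x + ψ y) ∧
        (∀ (c : k) x, ψ (c • x) = c • ψ x) ∧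
        (∀ x, ψ x = ψ (e * x * e)) ∧
        ψ e = 1 ∧
        (∀ x y, ψ (e * x * e) * ψ (e * y * e) = ψ ((e * x * e) * (e * y * e))) ∧
        (∀ x, ψ (e * x * e) = 0 → e * x * e = 0) ∧
        (∀ T : Matrix (Fin n) (Fin n) k, ∃ x, ψ (e * x * e) = T) ∧
        (∃ ρ : H → Matrix (Fin n) (Fin n) k,
          (∀ h, IsUnit (ρ h)) ∧
          (∀ h₁ h₂ : H, ∃ c : k, c ≠ 0 ∧ ρ (h₁ * h₂) = c • (ρ h₁ * ρ h₂)) ∧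
          (∀ (h : H) (x : A), ψ (σ h (e * x * e)) * ρ h = ρ h * ψ (e * x * e)))) ∧
      -- A ≅ Ind_H^G(eAe) via Φ a g = e (g⁻¹ · a) e, G-equivariantly
      (Function.Injective (fun a : A => fun g : G => e * (σ g⁻¹ a) * e) ∧
        (∀ a b : A, (fun g : G => e * (σ g⁻¹ (a + b)) * e) =
          (fun g => e * (σ g⁻¹ a) * e) + fun g => e * (σ g⁻¹ b) * e) ∧
        (∀ a b : A, (fun g : G => e * (σ g⁻¹ (a * b)) * e) =
          (fun g => e * (σ g⁻¹ a) * e) * fun g => e * (σ g⁻¹ b) * e) ∧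
        (∀ (g : G) (a : A) (x : G), e * (σ x⁻¹ (σ g a)) * e = e * (σ (g⁻¹ * x)⁻¹ a) * e) ∧
        Set.range (fun a : A => fun g : G => e * (σ g⁻¹ a) * e) =
          {f : G → A | (∀ g, f g = e * f g * e) ∧
            ∀ (g h : G), h ∈ H → f (g * h) = σ h⁻¹ (f g)}) := by
  have : Nontrivial A := ⟨⟨1, 0, hA⟩⟩
  obtain ⟨e, he⟩ := exists_isMinCentralIdem k (A := A)
  let H := (MulAction.stabilizer (A ≃ₐ[k] A) e).comap σ
  have hH : ∀ g, g ∈ H ↔ σ g e = e := fun g => Iff.rfl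
  have hN : (Nat.card H : k) ≠ 0 := H.natCast_card_ne_zero (by rwa [Nat.card_eq_fintype_card])
  have hcorner : ∀ h ∈ H, ∀ a, σ h (e * a * e) = e * σ h a * e := fun h hh a => by
    rw [map_mul, map_mul, (hH h).mp hh]
  obtain ⟨n, π, hn, hπ, hπe, hker⟩ := he.exists_surjective_algHom_matrix (k := k)
  have : NeZero n := ⟨hn.ne'⟩
  have hπcorner : ∀ x, π x = π (e * x * e) := fun x => by
    rw [map_mul, map_mul, hπe, one_mul, mul_one]
  obtain ⟨ρ, hρu, hρc, hρ⟩ := π.exists_projectiveRep hπ (σ.comp H.subtype) fun h x hx => by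
    rw [hker] at hx ⊢
    change e * σ h x = 0
    rw [← (hH h).mp h.2, ← map_mul, hx, map_zero]
  refine ⟨H, e, he, hH, hcorner, ⟨n, π, hn, map_add π, map_smul π, hπcorner, hπe,
    fun x y => (map_mul π _ _).symm, fun x hx => ?_, fun T => ?_, ρ, hρu, hρc, fun h x => hρ h _⟩,
    Function.LeftInverse.injective (g := fun f : G → A => (Nat.card H : k)⁻¹ • ∑ g, σ g (f g))
      (he.inv_card_smul_sum_map_mul_map_inv hH hindec hN),
    fun a b => by ext g; simp [mul_add, add_mul],
    fun a b => by ext g; simp [he.corner_mul],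
    fun g a x => by rw [mul_inv_rev, inv_inv, map_mul, AlgEquiv.mul_apply],
    he.range_mul_map_inv_mul hH hN⟩
  · have := (hker _).mp hx
    rwa [← mul_assoc, ← mul_assoc, he.mul_self] at this
  · obtain ⟨x, rfl⟩ := hπ T
    exact ⟨x, (hπcorner x).symm⟩
end

section
/- Let G be a finite group acting transitively on a finite set S of minimal central idempotents of a semisimple algebra A = ⊕_{s∈S} M_{n_s}(k) by algebra automorphisms. Fix e ∈ S with stabilizer H. Then the map A → Ind_H^G(eAe) (induced algebra) is a G-equivariant algebra isomorphism. -/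
section Aux

variable {A : Type*} [Ring A]

/-- Distinct minimal central idempotents are orthogonal. -/
lemma IsMinCentralIdem.orth {f₁ f₂ : A}
    (h1 : IsMinCentralIdem f₁) (h2 : IsMinCentralIdem f₂) (hne : f₁ ≠ f₂) :
    f₁ * f₂ = 0 := by
  obtain ⟨hne1, hi1, hc1, hm1⟩ := h1
  obtain ⟨hne2, hi2, hc2, hm2⟩ := h2
  have hc2' := Subring.mem_center_iff.mp hc2
  have hcp : f₁ * f₂ ∈ Subring.center A := Subring.mul_mem _ hc1 hc2
  have hip : (f₁ * f₂) * (f₁ * f₂) = f₁ * f₂ := by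
    rw [mul_assoc, ← mul_assoc f₂ f₁ f₂, ← hc2' f₁, mul_assoc f₁ f₂ f₂, hi2,
      ← mul_assoc, hi1]
  have hpf1 : (f₁ * f₂) * f₁ = f₁ * f₂ := by
    rw [mul_assoc, ← hc2' f₁, ← mul_assoc, hi1]
  have hpf2 : (f₁ * f₂) * f₂ = f₁ * f₂ := by
    rw [mul_assoc, hi2]
  rcases hm1 _ hcp hip hpf1 with h | h
  · exact h
  · rcases hm2 _ hcp hip hpf2 with h' | h'
    · exact h'
    · exact absurd (h.symm.trans h') hne

lemma central_idem_sandwich {u : A} (hc : u ∈ Subring.center A) (hi : u * u = u) (x : A) :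
    u * x * u = u * x := by
  have h := Subring.mem_center_iff.mp hc x
  rw [mul_assoc, h, ← mul_assoc, hi]

lemma idem_sandwich_self {u : A} (hi : u * u = u) (x : A) :
    u * (u * x * u) * u = u * x * u := by
  rw [← mul_assoc u (u * x) u, ← mul_assoc u u x, hi, mul_assoc (u * x) u u, hi]

lemma central_sandwich_mul {u : A} (hc : u ∈ Subring.center A) (hi : u * u = u) (x y : A) :
    (u * x * u) * (u * y * u) = u * (x * y) * u := by
  rw [central_idem_sandwich hc hi x, central_idem_sandwich hc hi y,
    central_idem_sandwich hc hi (x * y), ← mul_assoc (u * x) u y,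
    central_idem_sandwich hc hi x, mul_assoc]

variable {k : Type*} [CommSemiring k] [Algebra k A]

lemma central_map (φ : A ≃ₐ[k] A) {x : A} (hx : x ∈ Subring.center A) :
    φ x ∈ Subring.center A := by
  rw [Subring.mem_center_iff]
  intro b
  obtain ⟨c, rfl⟩ := φ.surjective b
  rw [← map_mul, ← map_mul, Subring.mem_center_iff.mp hx c]

/-- An algebra automorphism maps minimal central idempotents to
minimal central idempotents. -/
lemma IsMinCentralIdem.map_s13 (φ : A ≃ₐ[k] A) {e : A} (he : IsMinCentralIdem e) :
    IsMinCentralIdem (φ e) := by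
  obtain ⟨hne, hi, hc, hm⟩ := he
  refine ⟨fun h => hne (φ.injective (by rw [h, map_zero])), by rw [← map_mul, hi],
    central_map φ hc, ?_⟩
  intro f hf hff hfe
  have h1 : φ.symm f ∈ Subring.center A := central_map φ.symm hf
  have h2 : φ.symm f * φ.symm f = φ.symm f := by rw [← map_mul, hff]
  have h3 : φ.symm f * e = φ.symm f := by
    have := congrArg φ.symm hfe
    rwa [map_mul, AlgEquiv.symm_apply_apply] at this
  rcases hm _ h1 h2 h3 with h | h
  · left
    have := congrArg φ h
    rwa [AlgEquiv.apply_symm_apply, map_zero] at this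
  · right
    have := congrArg φ h
    rwa [AlgEquiv.apply_symm_apply] at this

end Aux

section Min

open Module

lemma rank_lt_of_lt (k : Type*) [Field k] {A : Type*} [Ring A] [Algebra k A]
    [FiniteDimensional k A] {p g : A} (hpc : p ∈ Subring.center A) (hpi : p * p = p)
    (hgi : g * g = g) (hpg : p * g = p) (hne : p ≠ g) :
    finrank k (LinearMap.range (LinearMap.mulLeft k p)) <
      finrank k (LinearMap.range (LinearMap.mulLeft k g)) := by
  apply Submodule.finrank_lt_finrank_of_lt
  rw [lt_iff_le_and_ne]
  constructor
  · rintro _ ⟨a, rfl⟩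
    refine ⟨p * a, ?_⟩
    simp only [LinearMap.mulLeft_apply]
    rw [← mul_assoc, Subring.mem_center_iff.mp hpc g, hpg]
  · intro hEq
    apply hne
    have hg : g ∈ LinearMap.range (LinearMap.mulLeft k p) := by
      rw [hEq]; exact ⟨g, by simp [hgi]⟩
    obtain ⟨a, ha⟩ := hg
    simp only [LinearMap.mulLeft_apply] at ha
    have : p * g = g := by rw [← ha, ← mul_assoc, hpi]
    rw [← hpg, this]

/-- Below every nonzero central idempotent of a finite-dimensional algebra
there is a minimal central idempotent. -/
lemma exists_min_central_idem_le (k : Type*) [Field k] {A : Type*} [Ring A]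
    [Algebra k A] [FiniteDimensional k A] {f : A} (hf0 : f ≠ 0) (hfi : f * f = f)
    (hfc : f ∈ Subring.center A) :
    ∃ m, IsMinCentralIdem m ∧ m * f = m := by
  classical
  have hex : ∃ n : ℕ, ∃ g : A,
      (g ≠ 0 ∧ g * g = g ∧ g ∈ Subring.center A ∧ g * f = g) ∧
        finrank k (LinearMap.range (LinearMap.mulLeft k g)) = n :=
    ⟨finrank k (LinearMap.range (LinearMap.mulLeft k f)), f, ⟨hf0, hfi, hfc, hfi⟩, rfl⟩
  obtain ⟨g, ⟨hg0, hgi, hgc, hgf⟩, hgr⟩ := Nat.find_spec hex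
  refine ⟨g, ⟨hg0, hgi, hgc, ?_⟩, hgf⟩
  intro p hpc hpi hpg
  by_contra hcon
  push_neg at hcon
  have hpf : p * f = p := by rw [← hpg, mul_assoc, hgf]
  have hlt : finrank k (LinearMap.range (LinearMap.mulLeft k p)) < Nat.find hex := by
    rw [← hgr]
    exact rank_lt_of_lt k hpc hpi hgi hpg hcon.2
  exact Nat.find_min hex hlt ⟨p, ⟨hcon.1, hpi, hpc, hpf⟩, rfl⟩

end Min

/-- The distinct elements of the orbit of a minimal central idempotent under a transitive
action sum to `1`. -/
lemma orbit_sum_eq_one {k : Type} [Field k] {A : Type} [Ring A] [Algebra k A]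
    [FiniteDimensional k A] {G : Type} [Group G] [Finite G]
    (σ : G →* (A ≃ₐ[k] A))
    (htrans : ∀ e₁ e₂, IsMinCentralIdem e₁ → IsMinCentralIdem e₂ → ∃ g, σ g e₁ = e₂)
    (e : A) (he : IsMinCentralIdem e) :
    ∃ T : Finset A, (∀ f ∈ T, ∃ g : G, σ g e = f) ∧ (∀ g : G, σ g e ∈ T) ∧
      ∑ f ∈ T, f = 1 := by
  classical
  cases nonempty_fintype G
  set T : Finset A := Finset.image (fun g : G => σ g e) Finset.univ with hT
  have hTmem : ∀ f ∈ T, ∃ g : G, σ g e = f := by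
    intro f hf
    obtain ⟨g, -, hg⟩ := Finset.mem_image.mp hf
    exact ⟨g, hg⟩
  have hTall : ∀ g : G, σ g e ∈ T := fun g =>
    Finset.mem_image.mpr ⟨g, Finset.mem_univ g, rfl⟩
  have hmin : ∀ f ∈ T, IsMinCentralIdem f := by
    intro f hf
    obtain ⟨g, hg⟩ := hTmem f hf
    exact hg ▸ he.map_s13 (σ g)
  have hEf : ∀ f ∈ T, (∑ f' ∈ T, f') * f = f := by
    intro f hf
    rw [Finset.sum_mul, Finset.sum_eq_single f
      (fun b hb hbf => (hmin b hb).orth (hmin f hf) hbf)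
      (fun h => absurd hf h)]
    exact (hmin f hf).2.1
  refine ⟨T, hTmem, hTall, ?_⟩
  by_contra hne
  set E := ∑ f ∈ T, f with hE
  have hEc : E ∈ Subring.center A := Subring.sum_mem _ fun f hf => (hmin f hf).2.2.1
  have hEi : E * E = E := by
    rw [hE, Finset.mul_sum]
    exact Finset.sum_congr rfl hEf
  have hu0 : (1 : A) - E ≠ 0 := sub_ne_zero.mpr (Ne.symm hne)
  have huc : (1 : A) - E ∈ Subring.center A :=
    Subring.sub_mem _ (Subring.one_mem _) hEc
  have hui : ((1 : A) - E) * (1 - E) = 1 - E := by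
    rw [mul_sub, sub_mul, sub_mul, one_mul, mul_one, hEi, one_mul, sub_self, sub_zero]
  obtain ⟨m, hm, hmu⟩ := exists_min_central_idem_le k hu0 hui huc
  obtain ⟨g, hg⟩ := htrans e m he hm
  have hmT : m ∈ T := hg ▸ hTall g
  have h1 : m * E = 0 := by
    rw [mul_sub, mul_one] at hmu
    exact sub_eq_self.mp hmu
  have h2 : E * m = m := hEf m hmT
  exact hm.1 (by rw [← h2, ← Subring.mem_center_iff.mp hEc m, h1])

/-- Let a finite group G act by k-algebra automorphisms on a semisimple
algebra A, transitively on the set of minimal central idempotents.  Fix such an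
idempotent e with stabilizer H.  Then the map Φ : A → (G → A), Φ a g = e (g⁻¹ · a) e, is
a G-equivariant algebra isomorphism from A onto the induced algebra
Ind_H^G(eAe) = { f : G → A | f g ∈ eAe and f (g h) = h⁻¹ · f g for h ∈ H }. -/
theorem induced_algebra_iso
    {k : Type} [Field k] {A : Type} [Ring A] [Algebra k A]
    [IsSemisimpleRing A] [FiniteDimensional k A]
    {G : Type} [Group G] [Finite G]
    (σ : G →* (A ≃ₐ[k] A))
    (htrans : ∀ e₁ e₂, IsMinCentralIdem e₁ → IsMinCentralIdem e₂ → ∃ g, σ g e₁ = e₂)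
    (e : A) (he : IsMinCentralIdem e)
    (H : Subgroup G) (hH : ∀ g, g ∈ H ↔ σ g e = e)
    (Φ : A → G → A) (hΦ : ∀ a g, Φ a g = e * (σ g⁻¹ a) * e) :
    Function.Injective Φ ∧
    (∀ a b, Φ (a + b) = Φ a + Φ b) ∧
    (∀ a b, Φ (a * b) = Φ a * Φ b) ∧
    (Φ 1 = fun _ => e) ∧
    (∀ (c : k) (a), Φ (c • a) = c • Φ a) ∧
    (∀ g a x, Φ (σ g a) x = Φ a (g⁻¹ * x)) ∧
    (Set.range Φ = {f : G → A |
      (∀ g, f g = e * f g * e) ∧ ∀ (g h : G), h ∈ H → f (g * h) = σ h⁻¹ (f g)}) := by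
  classical
  cases nonempty_fintype G
  obtain ⟨T, hTmem, hTall, hTsum⟩ := orbit_sum_eq_one σ htrans e he
  have hec := he.2.2.1
  have hei := he.2.1
  have cancel : ∀ (g : G) (x : A), σ g (σ g⁻¹ x) = x := fun g x => by
    rw [← AlgEquiv.mul_apply, ← map_mul, mul_inv_cancel, map_one, AlgEquiv.one_apply]
  refine ⟨?_, ?_, ?_, ?_, ?_, ?_, ?_⟩
  · -- injectivity
    intro a b hab
    have key : ∀ g : G, σ g e * a = σ g e * b := by
      intro g
      have h := congrFun hab g
      rw [hΦ, hΦ] at h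
      have h2 := congrArg (σ g) h
      simp only [map_mul] at h2
      rw [cancel g a, cancel g b] at h2
      have hc := central_map (σ g) hec
      have hi : σ g e * σ g e = σ g e := by rw [← map_mul, hei]
      rwa [central_idem_sandwich hc hi a, central_idem_sandwich hc hi b] at h2
    calc a = 1 * a := (one_mul a).symm
      _ = (∑ f ∈ T, f) * a := by rw [hTsum]
      _ = ∑ f ∈ T, f * a := Finset.sum_mul _ _ a
      _ = ∑ f ∈ T, f * b := Finset.sum_congr rfl fun f hf => by
            obtain ⟨g, hg⟩ := hTmem f hf
            rw [← hg]; exact key g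
      _ = (∑ f ∈ T, f) * b := (Finset.sum_mul _ _ b).symm
      _ = b := by rw [hTsum, one_mul]
  · -- additivity
    intro a b
    funext g
    simp only [hΦ, Pi.add_apply, map_add, mul_add, add_mul]
  · -- multiplicativity
    intro a b
    funext g
    rw [Pi.mul_apply, hΦ, hΦ, hΦ, map_mul, ← central_sandwich_mul hec hei]
  · -- unit
    funext g
    rw [hΦ, map_one, mul_one, hei]
  · -- scalar multiplication
    intro c a
    funext g
    rw [Pi.smul_apply, hΦ, hΦ, map_smul, mul_smul_comm, smul_mul_assoc]
  · -- equivariance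
    intro g a x
    rw [hΦ, hΦ, mul_inv_rev, inv_inv, ← AlgEquiv.mul_apply, ← map_mul]
  · -- range
    ext f
    simp only [Set.mem_range, Set.mem_setOf_eq]
    constructor
    · rintro ⟨a, rfl⟩
      constructor
      · intro g
        rw [hΦ]
        exact (idem_sandwich_self hei _).symm
      · intro g h hh
        have he' : σ h⁻¹ e = e := (hH h⁻¹).mp (H.inv_mem hh)
        rw [hΦ, hΦ, map_mul, map_mul, he', ← AlgEquiv.mul_apply, ← map_mul σ,
          ← mul_inv_rev]
    · rintro ⟨hf1, hf2⟩
      haveI : Fintype (G ⧸ H) := Fintype.ofFinite _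
      refine ⟨∑ q : G ⧸ H, σ q.out (f q.out), funext fun x => ?_⟩
      rw [hΦ, map_sum, Finset.mul_sum, Finset.sum_mul]
      rw [Finset.sum_eq_single ((x : G ⧸ H))]
      · have hmem : ((x : G ⧸ H)).out⁻¹ * x ∈ H :=
          QuotientGroup.eq.mp (QuotientGroup.out_eq' (x : G ⧸ H))
        have h2 := hf2 ((x : G ⧸ H)).out (((x : G ⧸ H)).out⁻¹ * x) hmem
        rw [mul_inv_cancel_left, mul_inv_rev, inv_inv] at h2
        rw [← AlgEquiv.mul_apply, ← map_mul σ, ← h2]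
        exact (hf1 x).symm
      · intro q _ hqx
        have hne : e ≠ σ (x⁻¹ * q.out) e := by
          intro hEq
          apply hqx
          have hmem : x⁻¹ * q.out ∈ H := (hH _).mpr hEq.symm
          exact (QuotientGroup.out_eq' q).symm.trans (QuotientGroup.eq.mpr hmem).symm
        have h0 : e * σ (x⁻¹ * q.out) e = 0 := he.orth (he.map_s13 (σ (x⁻¹ * q.out))) hne
        rw [hf1 q.out, ← AlgEquiv.mul_apply, ← map_mul σ, map_mul, map_mul]
        simp only [← mul_assoc]
        rw [h0, zero_mul, zero_mul, zero_mul]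
      · intro hx
        exact absurd (Finset.mem_univ _) hx
end

section
/- Let C be a braided monoidal category, A a commutative algebra in C (or more generally, an algebra), and M a module category of A-bimodules. Define α⁺, α⁻ : C → (A-bimodules) by α±(X) = A ⊗ X with right action twisted by the braiding β (for α⁺) or the inverse braiding (for α⁻). Then α⁺ and α⁻ are monoidal functors, i.e., there are natural isomorphisms α±(X ⊗ Y) ≅ α±(X) ⊗_A α±(Y) compatible with associativity, as a consequence of the hexagon axioms. -/
open CategoryTheory MonoidalCategory CategoryTheory.Limits

universe v₁ u₁

variable {C : Type u₁} [Category.{v₁} C] [MonoidalCategory C]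

section

variable [HasCoequalizers C]
  [∀ X : C, PreservesColimitsOfSize.{0, 0} (tensorLeft X)]
  [∀ X : C, PreservesColimitsOfSize.{0, 0} (tensorRight X)]
  {A : Mon C}

/-- A functor `F : C ⥤ Bimod A A` is monoidal (with respect to the tensor product
`⊗_A` of bimodules) if it comes with natural isomorphisms
`F(X ⊗ Y) ≅ F(X) ⊗_A F(Y)` compatible with the associativity constraints. -/
noncomputable def IsMonoidalOnBimod (F : C ⥤ Bimod A A) : Prop :=
  ∃ μ : ∀ X Y : C, F.obj (X ⊗ Y) ≅ (F.obj X).tensorBimod (F.obj Y),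
    (∀ {X X' Y Y' : C} (f : X ⟶ X') (g : Y ⟶ Y'),
      F.map (f ⊗ₘ g) ≫ (μ X' Y').hom =
        (μ X Y).hom ≫ Bimod.whiskerRight (F.map f) (F.obj Y) ≫
          Bimod.whiskerLeft (F.obj X') (F.map g)) ∧
    (∀ X Y Z : C,
      (μ (X ⊗ Y) Z).hom ≫ Bimod.whiskerRight (μ X Y).hom (F.obj Z) ≫
          (Bimod.associatorBimod (F.obj X) (F.obj Y) (F.obj Z)).hom =
        F.map (α_ X Y Z).hom ≫ (μ X (Y ⊗ Z)).hom ≫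
          Bimod.whiskerLeft (F.obj X) (μ Y Z).hom)

end

/-!
For an `A`-bimodule `P` and an object `Y`, the object `P ⊗ Y` is again an `A`-bimodule: `A` acts on
`P` from the left, and from the right after being braided past `Y` with `β_{Y,A}`; associativity of
this right action is the hexagon axiom for `β_{Y, A ⊗ A}`. Then `α⁺(X)` is this construction for the
regular bimodule `A`, and two isomorphisms give the monoidal structure:
`P ⊗_A α⁺(Y) ≅ P ⊗ Y`, collapsing `P ⊗ A` by the right action and inverted by inserting the unit of
`A`, and `(P ⊗ X) ⊗ Y ≅ P ⊗ (X ⊗ Y)`, the associator, which respects the twisted right actions by the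
hexagon axiom for `β_{X ⊗ Y, A}`. Their composite `α⁺(X ⊗ Y) ≅ α⁺(X) ⊗_A α⁺(Y)` sends
`a ⊗ x ⊗ y` to `(a ⊗ x) ⊗_A (1 ⊗ y)`, and on this formula naturality and compatibility with the
associators reduce to coherence in `C`. Finally `α⁻` is `α⁺` for the reverse braiding, whose
component at `(X, A)` is `β_{A,X}⁻¹`.
-/

namespace Bimod

variable [HasCoequalizers C]
  [∀ X : C, PreservesColimitsOfSize.{0, 0} (tensorLeft X)]
  [∀ X : C, PreservesColimitsOfSize.{0, 0} (tensorRight X)]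
  {R S T U : Mon C}

/-- The bare `coequalizer.π` has the unfolded coequalizer as target, which does not match
`(M.tensorBimod N).X` syntactically; naming the projection lets rewriting see one object. -/
noncomputable def tensorπ (M : Bimod R S) (N : Bimod S T) : M.X ⊗ N.X ⟶ (M.tensorBimod N).X :=
  coequalizer.π _ _

instance (M : Bimod R S) (N : Bimod S T) : Epi (tensorπ M N) :=
  coequalizer.π_epi

instance (M : Bimod R S) (N : Bimod S T) (X : C) : Epi (X ◁ tensorπ M N) :=
  (tensorLeft X).map_epi (tensorπ M N)

instance (M : Bimod R S) (N : Bimod S T) (X : C) : Epi (tensorπ M N ▷ X) :=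
  (tensorRight X).map_epi (tensorπ M N)

theorem tensorπ_condition (M : Bimod R S) (N : Bimod S T) :
    (M.actRight ▷ N.X) ≫ tensorπ M N = (α_ M.X S.X N.X).hom ≫ (M.X ◁ N.actLeft) ≫ tensorπ M N :=
  (coequalizer.condition _ _).trans (Category.assoc _ _ _)

theorem whiskerLeft_tensorπ_actLeft (M : Bimod R S) (N : Bimod S T) :
    (R.X ◁ tensorπ M N) ≫ (M.tensorBimod N).actLeft =
      (α_ R.X M.X N.X).inv ≫ (M.actLeft ▷ N.X) ≫ tensorπ M N :=
  TensorBimod.whiskerLeft_π_actLeft M N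

theorem tensorπ_whiskerRight_actRight (M : Bimod R S) (N : Bimod S T) :
    (tensorπ M N ▷ T.X) ≫ (M.tensorBimod N).actRight =
      (α_ M.X N.X T.X).hom ≫ (M.X ◁ N.actRight) ≫ tensorπ M N :=
  TensorBimod.π_tensor_id_actRight M N

theorem tensorπ_whiskerLeft_hom (M : Bimod R S) {N₁ N₂ : Bimod S T} (f : N₁ ⟶ N₂) :
    tensorπ M N₁ ≫ (whiskerLeft M f).hom = (M.X ◁ f.hom) ≫ tensorπ M N₂ :=
  ι_colimMap _ _

theorem tensorπ_whiskerRight_hom {M₁ M₂ : Bimod R S} (f : M₁ ⟶ M₂) (N : Bimod S T) :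
    tensorπ M₁ N ≫ (whiskerRight f N).hom = (f.hom ▷ N.X) ≫ tensorπ M₂ N :=
  ι_colimMap _ _

theorem tensorπ_associatorBimod_hom (P : Bimod R S) (Q : Bimod S T) (L : Bimod T U) :
    (tensorπ P Q ▷ L.X) ≫ tensorπ (P.tensorBimod Q) L ≫ (associatorBimod P Q L).hom.hom =
      (α_ P.X Q.X L.X).hom ≫ (P.X ◁ tensorπ Q L) ≫ tensorπ P (Q.tensorBimod L) := by
  erw [coequalizer.π_desc]
  exact π_tensor_id_preserves_coequalizer_inv_desc _ _ _ _

end Bimod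

namespace AlphaInduction

open MonObj

section Regular

variable {A : Mon C}

/-- `Bimod.regular A` with reducible fields, so that its carrier is syntactically `A.X`. -/
abbrev regular (A : Mon C) : Bimod A A where
  X := A.X
  actLeft := μ
  actRight := μ
  one_actLeft := (Bimod.regular A).one_actLeft
  left_assoc := (Bimod.regular A).left_assoc
  actRight_one := (Bimod.regular A).actRight_one
  right_assoc := (Bimod.regular A).right_assoc
  middle_assoc := (Bimod.regular A).middle_assoc

noncomputable def insertUnit (A : Mon C) (Y : C) : Y ⟶ A.X ⊗ Y :=
  (λ_ Y).inv ≫ η ▷ Y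

theorem insertUnit_naturality {Y Y' : C} (g : Y ⟶ Y') :
    insertUnit A Y ≫ A.X ◁ g = g ≫ insertUnit A Y' := by
  rw [insertUnit, insertUnit, Category.assoc, ← whisker_exchange, leftUnitor_inv_naturality_assoc]

theorem insertUnit_tensor (Y Z : C) :
    insertUnit A (Y ⊗ Z) = insertUnit A Y ▷ Z ≫ (α_ A.X Y Z).hom := by
  simp [insertUnit]

end Regular

section Twist

variable [BraidedCategory C] {A : Mon C}

@[reducible, simps]
noncomputable def twistedTensor (P : Bimod A A) (Y : C) : Bimod A A where
  X := P.X ⊗ Y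
  actLeft := (α_ A.X P.X Y).inv ≫ (P.actLeft ▷ Y)
  actRight := (α_ P.X Y A.X).hom ≫ (P.X ◁ (β_ Y A.X).hom) ≫ (α_ P.X A.X Y).inv ≫
    (P.actRight ▷ Y)
  one_actLeft := by
    slice_lhs 1 2 => rw [associator_inv_naturality_left]
    slice_lhs 2 3 => rw [← comp_whiskerRight, Bimod.one_actLeft]
    monoidal
  left_assoc := by
    slice_lhs 1 2 => rw [associator_inv_naturality_left]
    slice_lhs 2 3 => rw [← comp_whiskerRight, Bimod.left_assoc, comp_whiskerRight,
      comp_whiskerRight]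
    slice_rhs 2 2 => rw [MonoidalCategory.whiskerLeft_comp]
    slice_rhs 3 4 => rw [associator_inv_naturality_middle]
    monoidal
  actRight_one := by
    slice_lhs 1 2 => rw [associator_naturality_right]
    slice_lhs 2 3 => rw [← MonoidalCategory.whiskerLeft_comp,
      BraidedCategory.braiding_naturality_right, MonoidalCategory.whiskerLeft_comp]
    slice_lhs 3 4 => rw [associator_inv_naturality_middle]
    slice_lhs 4 5 => rw [← comp_whiskerRight, Bimod.actRight_one]
    simp
  right_assoc := by
    simp only [comp_whiskerRight, Category.assoc]
    slice_rhs 5 6 => rw [associator_naturality_left]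
    slice_rhs 6 7 => rw [← whisker_exchange]
    slice_rhs 7 8 => rw [associator_inv_naturality_left]
    slice_rhs 8 9 => rw [← comp_whiskerRight, (Iso.inv_comp_eq _).1 P.right_assoc.symm]
    slice_lhs 1 2 => rw [associator_naturality_right]
    slice_lhs 2 3 => rw [← MonoidalCategory.whiskerLeft_comp,
      BraidedCategory.braiding_naturality_right, MonoidalCategory.whiskerLeft_comp]
    rw [BraidedCategory.braiding_tensor_right_hom]
    simp only [MonoidalCategory.whiskerLeft_comp, comp_whiskerRight, Category.assoc]
    slice_lhs 7 8 => rw [associator_inv_naturality_middle]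
    monoidal
  middle_assoc := by
    simp only [comp_whiskerRight, MonoidalCategory.whiskerLeft_comp, Category.assoc]
    slice_lhs 2 3 => rw [associator_naturality_left]
    slice_lhs 3 4 => rw [← whisker_exchange]
    slice_lhs 4 5 => rw [associator_inv_naturality_left]
    slice_lhs 5 6 => rw [← comp_whiskerRight, Bimod.middle_assoc, comp_whiskerRight,
      comp_whiskerRight]
    slice_rhs 5 6 => rw [associator_inv_naturality_middle]
    monoidal

@[reducible, simps]
noncomputable def twistedTensorFunctor (P : Bimod A A) : C ⥤ Bimod A A where
  obj := twistedTensor P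
  map f :=
    { hom := P.X ◁ f
      left_act_hom := by
        dsimp
        slice_rhs 1 2 => rw [associator_inv_naturality_right]
        slice_rhs 2 3 => rw [whisker_exchange]
        simp
      right_act_hom := by
        dsimp
        slice_lhs 4 5 => rw [← whisker_exchange]
        slice_rhs 1 2 => rw [associator_naturality_middle]
        slice_rhs 2 3 => rw [← MonoidalCategory.whiskerLeft_comp,
          BraidedCategory.braiding_naturality_left, MonoidalCategory.whiskerLeft_comp]
        slice_rhs 3 4 => rw [associator_inv_naturality_right]
        simp }

noncomputable def twistedTensorAssoc (P : Bimod A A) (X Y : C) :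
    twistedTensor (twistedTensor P X) Y ≅ twistedTensor P (X ⊗ Y) :=
  Bimod.isoOfIso (α_ P.X X Y)
    (by
      dsimp
      simp only [comp_whiskerRight, Category.assoc]
      slice_lhs 3 4 => rw [associator_naturality_left]
      monoidal)
    (by
      dsimp
      rw [BraidedCategory.braiding_tensor_left_hom]
      simp only [MonoidalCategory.whiskerLeft_comp, comp_whiskerRight, Category.assoc]
      slice_lhs 7 8 => rw [associator_naturality_left]
      monoidal)

noncomputable abbrev alpha (A : Mon C) : C ⥤ Bimod A A :=
  twistedTensorFunctor (regular A)

theorem whiskerLeft_insertUnit_actLeft (Y : C) :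
    A.X ◁ insertUnit A Y ≫ ((alpha A).obj Y).actLeft = 𝟙 _ := by
  dsimp [insertUnit]
  rw [MonoidalCategory.whiskerLeft_comp]
  slice_lhs 2 3 => rw [associator_inv_naturality_middle]
  slice_lhs 3 4 => rw [← comp_whiskerRight, MonObj.mul_one]
  monoidal

end Twist

variable [BraidedCategory C] [HasCoequalizers C]
  [∀ X : C, PreservesColimitsOfSize.{0, 0} (tensorLeft X)]
  [∀ X : C, PreservesColimitsOfSize.{0, 0} (tensorRight X)]
  {A : Mon C}

noncomputable def tensorAlphaHom (P : Bimod A A) (Y : C) :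
    (P.tensorBimod ((alpha A).obj Y)).X ⟶ P.X ⊗ Y :=
  coequalizer.desc ((α_ P.X A.X Y).inv ≫ (P.actRight ▷ Y)) (by
    dsimp
    slice_lhs 1 2 => rw [associator_inv_naturality_left]
    slice_lhs 2 3 => rw [← comp_whiskerRight, (Iso.inv_comp_eq _).1 P.right_assoc.symm]
    simp only [comp_whiskerRight, MonoidalCategory.whiskerLeft_comp, Category.assoc]
    slice_rhs 3 4 => rw [associator_inv_naturality_middle]
    monoidal)

theorem tensorπ_tensorAlphaHom (P : Bimod A A) (Y : C) :
    Bimod.tensorπ P ((alpha A).obj Y) ≫ tensorAlphaHom P Y =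
      (α_ P.X A.X Y).inv ≫ (P.actRight ▷ Y) :=
  coequalizer.π_desc _ _

noncomputable def tensorAlphaInv (P : Bimod A A) (Y : C) :
    P.X ⊗ Y ⟶ (P.tensorBimod ((alpha A).obj Y)).X :=
  (P.X ◁ insertUnit A Y) ≫ Bimod.tensorπ P ((alpha A).obj Y)

theorem tensorAlphaHom_tensorAlphaInv (P : Bimod A A) (Y : C) :
    tensorAlphaHom P Y ≫ tensorAlphaInv P Y = 𝟙 _ := by
  rw [← cancel_epi (Bimod.tensorπ _ _), reassoc_of% tensorπ_tensorAlphaHom, tensorAlphaInv,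
    Category.comp_id]
  slice_lhs 2 3 => rw [← whisker_exchange]
  slice_lhs 3 4 => rw [Bimod.tensorπ_condition P ((alpha A).obj Y)]
  slice_lhs 2 3 => rw [associator_naturality_right]
  slice_lhs 3 4 => rw [← MonoidalCategory.whiskerLeft_comp, whiskerLeft_insertUnit_actLeft]
  simp

theorem tensorAlphaInv_tensorAlphaHom (P : Bimod A A) (Y : C) :
    tensorAlphaInv P Y ≫ tensorAlphaHom P Y = 𝟙 _ := by
  rw [tensorAlphaInv, Category.assoc, tensorπ_tensorAlphaHom, insertUnit,
    MonoidalCategory.whiskerLeft_comp]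
  slice_lhs 2 3 => rw [associator_inv_naturality_middle]
  slice_lhs 3 4 => rw [← comp_whiskerRight, Bimod.actRight_one]
  monoidal

theorem tensorAlphaHom_actLeft (P : Bimod A A) (Y : C) :
    (P.tensorBimod ((alpha A).obj Y)).actLeft ≫ tensorAlphaHom P Y =
      (A.X ◁ tensorAlphaHom P Y) ≫ (twistedTensor P Y).actLeft := by
  rw [← cancel_epi (A.X ◁ Bimod.tensorπ _ _), reassoc_of% Bimod.whiskerLeft_tensorπ_actLeft,
    tensorπ_tensorAlphaHom, ← MonoidalCategory.whiskerLeft_comp_assoc, tensorπ_tensorAlphaHom]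
  dsimp
  slice_lhs 2 3 => rw [associator_inv_naturality_left]
  slice_lhs 3 4 => rw [← comp_whiskerRight, Bimod.middle_assoc, comp_whiskerRight,
    comp_whiskerRight]
  rw [MonoidalCategory.whiskerLeft_comp]
  slice_rhs 2 3 => rw [associator_inv_naturality_middle]
  monoidal

theorem tensorAlphaHom_actRight (P : Bimod A A) (Y : C) :
    (P.tensorBimod ((alpha A).obj Y)).actRight ≫ tensorAlphaHom P Y =
      (tensorAlphaHom P Y ▷ A.X) ≫ (twistedTensor P Y).actRight := by
  rw [← cancel_epi (Bimod.tensorπ _ _ ▷ A.X), reassoc_of% Bimod.tensorπ_whiskerRight_actRight,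
    tensorπ_tensorAlphaHom, ← comp_whiskerRight_assoc, tensorπ_tensorAlphaHom]
  dsimp
  simp only [MonoidalCategory.whiskerLeft_comp, comp_whiskerRight, Category.assoc]
  slice_lhs 5 6 => rw [associator_inv_naturality_middle]
  slice_lhs 6 7 => rw [← comp_whiskerRight, Bimod.right_assoc, comp_whiskerRight,
    comp_whiskerRight]
  slice_rhs 2 3 => rw [associator_naturality_left]
  slice_rhs 3 4 => rw [← whisker_exchange]
  slice_rhs 4 5 => rw [associator_inv_naturality_left]
  monoidal

noncomputable def tensorAlphaIso (P : Bimod A A) (Y : C) :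
    P.tensorBimod ((alpha A).obj Y) ≅ twistedTensor P Y :=
  Bimod.isoOfIso ⟨tensorAlphaHom P Y, tensorAlphaInv P Y, tensorAlphaHom_tensorAlphaInv P Y,
    tensorAlphaInv_tensorAlphaHom P Y⟩ (tensorAlphaHom_actLeft P Y) (tensorAlphaHom_actRight P Y)

noncomputable def alphaTensorIso (X Y : C) :
    (alpha A).obj (X ⊗ Y) ≅ ((alpha A).obj X).tensorBimod ((alpha A).obj Y) :=
  (twistedTensorAssoc (regular A) X Y).symm ≪≫ (tensorAlphaIso ((alpha A).obj X) Y).symm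

theorem alphaTensorIso_hom_hom (X Y : C) :
    (alphaTensorIso (A := A) X Y).hom.hom =
      (α_ A.X X Y).inv ≫ ((A.X ⊗ X) ◁ insertUnit A Y) ≫
        Bimod.tensorπ ((alpha A).obj X) ((alpha A).obj Y) :=
  rfl

theorem alpha_isMonoidalOnBimod (A : Mon C) : IsMonoidalOnBimod (alpha A) := by
  refine ⟨alphaTensorIso, fun {X X' Y Y'} f g => ?_, fun X Y Z => ?_⟩
  · ext
    simp only [Bimod.comp_hom', alphaTensorIso_hom_hom, Category.assoc,
      reassoc_of% Bimod.tensorπ_whiskerRight_hom, Bimod.tensorπ_whiskerLeft_hom]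
    rw [whisker_exchange_assoc, ← MonoidalCategory.whiskerLeft_comp_assoc,
      insertUnit_naturality, MonoidalCategory.tensorHom_def]
    monoidal
  · ext
    simp only [Bimod.comp_hom', alphaTensorIso_hom_hom, Category.assoc, comp_whiskerRight,
      reassoc_of% Bimod.tensorπ_whiskerRight_hom, Bimod.tensorπ_whiskerLeft_hom,
      insertUnit_tensor, MonoidalCategory.whiskerLeft_comp,
      MonoidalCategory.whiskerLeft_hom_inv_assoc]
    rw [Bimod.tensorπ_associatorBimod_hom ((alpha A).obj X) ((alpha A).obj Y) ((alpha A).obj Z),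
      ← MonoidalCategory.whiskerLeft_comp_assoc, ← whisker_exchange]
    monoidal

end AlphaInduction

/-- α-induction: let `C` be a braided monoidal category (with
coequalizers preserved by tensoring) and `A` an algebra in `C`.  There are functors
`α⁺, α⁻ : C ⥤ Bimod A A`, with `α^±(X) = A ⊗ X` as a left module (left action by
multiplication), right action twisted by the braiding `β_{X,A}` (for `α⁺`) resp. by the
inverse braiding `β_{A,X}⁻¹` (for `α⁻`), and both functors are monoidal: there are
natural isomorphisms `α^±(X ⊗ Y) ≅ α^±(X) ⊗_A α^±(Y)` compatible with associativity
(a consequence of the hexagon axioms). -/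
theorem alpha_induction_monoidal
    [BraidedCategory C] [HasCoequalizers C]
    [∀ X : C, PreservesColimitsOfSize.{0, 0} (tensorLeft X)]
    [∀ X : C, PreservesColimitsOfSize.{0, 0} (tensorRight X)]
    (A : Mon C) :
    ∃ Fp Fm : C ⥤ Bimod A A,
      (∀ X : C, ∃ h : (Fp.obj X).X = A.X ⊗ X,
        (Fp.obj X).actLeft =
          eqToHom (by rw [h]) ≫ (α_ A.X A.X X).inv ≫ (MonObj.mul (X := A.X) ▷ X) ≫ eqToHom h.symm ∧
        (Fp.obj X).actRight =
          eqToHom (by rw [h]) ≫ (α_ A.X X A.X).hom ≫ (A.X ◁ (β_ X A.X).hom) ≫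
            (α_ A.X A.X X).inv ≫ (MonObj.mul (X := A.X) ▷ X) ≫ eqToHom h.symm) ∧
      (∀ X : C, ∃ h : (Fm.obj X).X = A.X ⊗ X,
        (Fm.obj X).actLeft =
          eqToHom (by rw [h]) ≫ (α_ A.X A.X X).inv ≫ (MonObj.mul (X := A.X) ▷ X) ≫ eqToHom h.symm ∧
        (Fm.obj X).actRight =
          eqToHom (by rw [h]) ≫ (α_ A.X X A.X).hom ≫ (A.X ◁ (β_ A.X X).inv) ≫
            (α_ A.X A.X X).inv ≫ (MonObj.mul (X := A.X) ▷ X) ≫ eqToHom h.symm) ∧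
      IsMonoidalOnBimod Fp ∧ IsMonoidalOnBimod Fm := by
  refine ⟨AlphaInduction.alpha A, @AlphaInduction.alpha C _ _ (reverseBraiding C) A,
    fun X => ⟨rfl, by simp, by simp⟩, fun X => ⟨rfl, by simp, by simp; rfl⟩,
    AlphaInduction.alpha_isMonoidalOnBimod A,
    @AlphaInduction.alpha_isMonoidalOnBimod C _ _ (reverseBraiding C) _ _ _ A⟩
end
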